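/- arXiv:2409.17893 — 9 statements merged into one kernel-verified Lean document; each statement's English description precedes it below -/
import Mathlib

section
/- For an Eulerian digraph D on n vertices, the common number of arborescences arb(D) satisfies arb(D) = (1/n)·∏_{i=1}^{n-1} λ_i, where λ_1,...,λ_{n-1} are the nonzero-slot eigenvalues of the Laplacian L(D) (all eigenvalues other than the eigenvalue 0 on the all-ones vector). -/
open Matrix BigOperators Finset Polynomial

/-- A digraph on `n` vertices is given by edge multiplicities `D i j`. Out-degree of `i`. -/
def outdeg {n : ℕ} (D : Fin n → Fin n → ℕ) (i : Fin n) : ℕ := ∑ j, D i j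

/-- In-degree of `i`. -/
def indeg {n : ℕ} (D : Fin n → Fin n → ℕ) (i : Fin n) : ℕ := ∑ j, D j i

/-- The (out-degree) Laplacian matrix of a digraph. -/
def lap {n : ℕ} (D : Fin n → Fin n → ℕ) : Matrix (Fin n) (Fin n) ℤ :=
  Matrix.of fun i j => if i = j then (outdeg D i : ℤ) else -(D i j : ℤ)

/-- The number of arborescences rooted at `v` (via Tutte's matrix-tree theorem):
the determinant of the Laplacian with row and column `v` deleted. -/
def arb {n : ℕ} (D : Fin n → Fin n → ℕ) (v : Fin n) : ℤ :=
  ((lap D).submatrix (fun i : {j : Fin n // j ≠ v} => (i : Fin n))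
    (fun j : {j : Fin n // j ≠ v} => (j : Fin n))).det

/-- The total number of arborescences over all roots. -/
def allarb {n : ℕ} (D : Fin n → Fin n → ℕ) : ℤ := ∑ v, arb D v

/-- A tournament: no loops, and exactly one arc between any two distinct vertices. -/
def IsTournament {n : ℕ} (D : Fin n → Fin n → ℕ) : Prop :=
  (∀ i, D i i = 0) ∧ ∀ i j, i ≠ j → D i j + D j i = 1



section DerivDet

variable {R : Type*} [CommRing R] {m : Type*} [Fintype m] [DecidableEq m]

lemma my_derivative_finset_prod {ι : Type*} [DecidableEq ι] (s : Finset ι) (f : ι → R[X]) :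
    derivative (∏ i ∈ s, f i) = ∑ i ∈ s, (∏ j ∈ s.erase i, f j) * derivative (f i) := by
  induction s using Finset.induction_on with
  | empty => simp
  | insert a s ha ih =>
    rw [Finset.prod_insert ha, derivative_mul, ih, Finset.sum_insert ha, Finset.erase_insert ha,
      Finset.mul_sum]
    refine congrArg₂ (· + ·) (mul_comm _ _) (Finset.sum_congr rfl fun i hi => ?_)
    rw [Finset.erase_insert_of_ne (by rintro rfl; exact ha hi),
      Finset.prod_insert (fun h => ha (Finset.mem_of_mem_erase h)), mul_assoc]

lemma my_derivative_det (A : Matrix m m R[X]) :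
    derivative A.det = ∑ i, (A.updateCol i fun r => derivative (A r i)).det := by
  have key : ∀ (σ : Equiv.Perm m) (i : m),
      (∏ j ∈ Finset.univ.erase i, A (σ j) j) * derivative (A (σ i) i)
        = ∏ j, (A.updateCol i fun r => derivative (A r i)) (σ j) j := by
    intro σ i
    rw [← Finset.mul_prod_erase Finset.univ _ (Finset.mem_univ i), Matrix.updateCol_apply,
      if_pos rfl, mul_comm]
    congr 1
    refine Finset.prod_congr rfl fun j hj => ?_
    rw [Matrix.updateCol_apply, if_neg (Finset.ne_of_mem_erase hj)]
  calc derivative A.det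
      = ∑ σ : Equiv.Perm m, Equiv.Perm.sign σ •
          ∑ i, (∏ j ∈ Finset.univ.erase i, A (σ j) j) * derivative (A (σ i) i) := by
        rw [Matrix.det_apply, map_sum]
        refine Finset.sum_congr rfl fun σ _ => ?_
        rw [derivative_smul, my_derivative_finset_prod]
    _ = ∑ i, ∑ σ : Equiv.Perm m, Equiv.Perm.sign σ •
          ((∏ j ∈ Finset.univ.erase i, A (σ j) j) * derivative (A (σ i) i)) := by
        simp_rw [Finset.smul_sum]
        exact Finset.sum_comm
    _ = ∑ i, (A.updateCol i fun r => derivative (A r i)).det := by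
        refine Finset.sum_congr rfl fun i _ => ?_
        rw [Matrix.det_apply]
        exact Finset.sum_congr rfl fun σ _ => by rw [key σ i]

lemma my_charpoly_coeff_one (M : Matrix m m R) :
    M.charpoly.coeff 1 = (-1 : R) ^ (Fintype.card m - 1) * Matrix.trace (adjugate M) := by
  have h1 : M.charpoly.coeff 1 = (derivative M.charpoly).eval 0 := by
    rw [← Polynomial.coeff_zero_eq_eval_zero, Polynomial.coeff_derivative]
    simp
  have hcol : ∀ i : m, (fun r => derivative (charmatrix M r i)) = Pi.single i (1 : R[X]) := by
    intro i
    funext r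
    by_cases h : r = i
    · subst h
      rw [charmatrix_apply_eq, Pi.single_eq_same]
      simp
    · rw [charmatrix_apply_ne _ _ _ h, Pi.single_eq_of_ne h]
      simp
  have h2 : ∀ i : m, ((charmatrix M).updateCol i fun r => derivative (charmatrix M r i)).det
      = adjugate (charmatrix M) i i := by
    intro i
    rw [hcol i, ← Matrix.det_transpose, ← Matrix.updateRow_transpose, ← Matrix.adjugate_apply,
      ← Matrix.adjugate_transpose, Matrix.transpose_apply]
  have h3 : (charmatrix M).map (Polynomial.evalRingHom (0 : R)) = -M := by
    ext i j
    by_cases h : i = j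
    · subst h
      simp [charmatrix_apply_eq]
    · simp [charmatrix_apply_ne _ _ _ h, h]
  have h4 : trace (adjugate (-M)) = (-1 : R) ^ (Fintype.card m - 1) * trace (adjugate M) := by
    rw [show -M = (-1 : R) • M by simp, Matrix.adjugate_smul, Matrix.trace_smul, smul_eq_mul]
  rw [h1, Matrix.charpoly, my_derivative_det, Polynomial.eval_finset_sum]
  simp_rw [h2]
  have h5 : ∀ i : m, (adjugate (charmatrix M) i i).eval 0
      = adjugate ((charmatrix M).map (Polynomial.evalRingHom (0 : R))) i i := by
    intro i
    have := (Polynomial.evalRingHom (0 : R)).map_adjugate (charmatrix M)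
    have h' : adjugate ((charmatrix M).map (Polynomial.evalRingHom (0 : R)))
        = (adjugate (charmatrix M)).map (Polynomial.evalRingHom (0 : R)) := this.symm
    rw [h']
    rfl
  simp_rw [h5, h3]
  have h6 : Matrix.trace (adjugate (-M)) = ∑ i, adjugate (-M) i i := rfl
  rw [← h6, h4]

end DerivDet

section AdjConst

variable {F : Type*} [Field F] {m : Type*} [Fintype m] [DecidableEq m]

lemma adj_fst (A : Matrix m m F) (h : A *ᵥ (fun _ => (1 : F)) = 0) (i i' j : m) :
    adjugate A i j = adjugate A i' j := by
  have hz : (A.updateRow j (Pi.single i (1 : F) - Pi.single i' 1)).det = 0 := by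
    rw [← Matrix.exists_mulVec_eq_zero_iff]
    refine ⟨fun _ => 1, fun hc => one_ne_zero (congrFun hc j), ?_⟩
    ext r
    by_cases hr : r = j
    · subst hr
      simp [Matrix.mulVec, Matrix.updateRow_apply, dotProduct, Pi.single_apply,
        Finset.sum_sub_distrib]
    · have := congrFun h r
      simpa [Matrix.mulVec, Matrix.updateRow_apply, hr, dotProduct] using this
  have hadd := Matrix.det_updateRow_add A j (Pi.single i (1 : F) - Pi.single i' 1)
    (Pi.single i' 1)
  rw [sub_add_cancel] at hadd
  rw [Matrix.adjugate_apply, Matrix.adjugate_apply, hadd, hz, zero_add]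

lemma adj_snd (A : Matrix m m F) (h : (fun _ => (1 : F)) ᵥ* A = 0) (i j j' : m) :
    adjugate A i j = adjugate A i j' := by
  have h' : Aᵀ *ᵥ (fun _ => (1 : F)) = 0 := by rw [Matrix.mulVec_transpose]; exact h
  have := adj_fst Aᵀ h' j j' i
  rw [← Matrix.adjugate_transpose] at this
  simpa using this

end AdjConst

lemma arb_eq_adj {n : ℕ} (D : Fin n → Fin n → ℕ) (v : Fin n) :
    arb D v = adjugate (lap D) v v := by
  cases n with
  | zero => exact v.elim0
  | succ m =>
    rw [Matrix.adjugate_fin_succ_eq_det_submatrix]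
    have hsgn : ((-1 : ℤ)) ^ ((v : ℕ) + (v : ℕ)) = 1 := Even.neg_one_pow ⟨v, rfl⟩
    rw [hsgn, one_mul]
    have h1 : ∀ i : {j : Fin (m+1) // j ≠ v},
        v.succAbove ((finSuccAboveEquiv v).symm i) = (i : Fin (m+1)) := by
      intro i
      have := (finSuccAboveEquiv v).apply_symm_apply i
      rw [finSuccAboveEquiv_apply] at this
      exact congrArg Subtype.val this
    have he : (lap D).submatrix (fun i : {j : Fin (m+1) // j ≠ v} => (i : Fin (m+1)))
        (fun j : {j : Fin (m+1) // j ≠ v} => (j : Fin (m+1)))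
        = ((lap D).submatrix v.succAbove v.succAbove).submatrix
          ((finSuccAboveEquiv v).symm) ((finSuccAboveEquiv v).symm) := by
      ext i j
      simp only [Matrix.submatrix_apply, h1]
    rw [arb, he, Matrix.det_submatrix_equiv_self]

theorem stmt2 {n : ℕ} (D : Fin n → Fin n → ℕ) (hloop : ∀ i, D i i = 0)
    (hEul : ∀ i, indeg D i = outdeg D i) (v : Fin n) :
    (n : ℤ) * arb D v = (-1 : ℤ) ^ (n - 1) * (lap D).charpoly.coeff 1 := by
  classical
  have hlapE : ∀ i j, lap D i j = (if i = j then (outdeg D i : ℤ) else 0) - (D i j : ℤ) := by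
    intro i j
    by_cases h : i = j
    · subst h; simp [lap, hloop]
    · simp [lap, h]
  have hrow : ∀ i, ∑ j, lap D i j = 0 := by
    intro i
    simp only [hlapE, Finset.sum_sub_distrib]
    have h1 : ∑ j, (if i = j then (outdeg D i : ℤ) else 0) = (outdeg D i : ℤ) := by simp
    rw [h1, outdeg]
    push_cast
    ring
  have hcol : ∀ j, ∑ i, lap D i j = 0 := by
    intro j
    simp only [hlapE, Finset.sum_sub_distrib]
    have h1 : ∑ i, (if i = j then (outdeg D i : ℤ) else 0) = (outdeg D j : ℤ) := by simp
    rw [h1]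
    have h2 : (∑ i, (D i j : ℤ)) = (indeg D j : ℤ) := by rw [indeg]; push_cast; ring
    rw [h2, hEul j, sub_self]
  set L := lap D with hLdef
  set A : Matrix (Fin n) (Fin n) ℚ := L.map (Int.cast : ℤ → ℚ) with hAdef
  have hA : adjugate A = (adjugate L).map (Int.cast : ℤ → ℚ) := by
    have := (Int.castRingHom ℚ).map_adjugate L
    simpa [RingHom.mapMatrix_apply, hAdef] using this.symm
  have hr : A *ᵥ (fun _ => (1:ℚ)) = 0 := by
    ext r
    have h0 := hrow r
    simp only [Matrix.mulVec, dotProduct, Matrix.map_apply, mul_one, Pi.zero_apply, hAdef]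
    exact_mod_cast congrArg (Int.cast : ℤ → ℚ) h0
  have hc : (fun _ => (1:ℚ)) ᵥ* A = 0 := by
    ext r
    have h0 := hcol r
    simp only [Matrix.vecMul, dotProduct, Matrix.map_apply, one_mul, Pi.zero_apply, hAdef]
    exact_mod_cast congrArg (Int.cast : ℤ → ℚ) h0
  have hAdjConst : ∀ w : Fin n, adjugate L w w = adjugate L v v := by
    intro w
    have hq : adjugate A w w = adjugate A v v := by
      calc adjugate A w w = adjugate A v w := adj_fst A hr w v w
        _ = adjugate A v v := adj_snd A hc v w v
    rw [hA] at hq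
    simp only [Matrix.map_apply] at hq
    exact_mod_cast hq
  have htr : Matrix.trace (adjugate L) = (n : ℤ) * adjugate L v v := by
    have h0 : Matrix.trace (adjugate L) = ∑ w, adjugate L w w := rfl
    rw [h0, Finset.sum_congr rfl fun w _ => hAdjConst w, Finset.sum_const, Finset.card_univ,
      Fintype.card_fin, nsmul_eq_mul]
  rw [arb_eq_adj, my_charpoly_coeff_one L, Fintype.card_fin, ← mul_assoc, ← pow_add]
  have heven : ((-1 : ℤ)) ^ ((n-1) + (n-1)) = 1 := Even.neg_one_pow ⟨n-1, rfl⟩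
  rw [heven, one_mul, htr]
end

section
/- If d_1^+, ..., d_n^+ is the out-degree sequence of a tournament on n vertices, then ∏_{k=1}^n (d_k^+ + 1) ≥ n!, with equality if and only if the degree sequence is a permutation of (0, 1, ..., n-1). -/
open Matrix BigOperators Finset Polynomial

section Aux
variable {n : ℕ}

/-- Reverse the arc between `u` and `v`. -/
def flipE (D : Fin n → Fin n → ℕ) (u v : Fin n) : Fin n → Fin n → ℕ :=
  fun i j => if i = u ∧ j = v then D v u else if i = v ∧ j = u then D u v else D i j

lemma flip_isT {D : Fin n → Fin n → ℕ} (hT : IsTournament D) {u v : Fin n}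
    (huv : u ≠ v) : IsTournament (flipE D u v) := by
  obtain ⟨h0, h1⟩ := hT
  constructor
  · intro i
    unfold flipE
    split_ifs with h h'
    · exact absurd (h.1.symm.trans h.2) huv
    · exact absurd (h'.1.symm.trans h'.2) huv.symm
    · exact h0 i
  · intro i j hij
    by_cases hA : i = u ∧ j = v
    · obtain ⟨rfl, rfl⟩ := hA
      unfold flipE
      rw [if_pos ⟨rfl, rfl⟩, if_neg (fun h => hij h.2), if_pos ⟨rfl, rfl⟩,
        Nat.add_comm]
      exact h1 i j hij
    · by_cases hB : i = v ∧ j = u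
      · obtain ⟨rfl, rfl⟩ := hB
        unfold flipE
        rw [if_neg (fun h => hij h.1), if_pos ⟨rfl, rfl⟩, if_pos ⟨rfl, rfl⟩,
          Nat.add_comm]
        exact h1 i j hij
      · unfold flipE
        rw [if_neg hA, if_neg hB, if_neg (fun h => hB ⟨h.2, h.1⟩),
          if_neg (fun h => hA ⟨h.2, h.1⟩)]
        exact h1 i j hij

lemma flip_row_u {D : Fin n → Fin n → ℕ} {u v : Fin n} (huv : u ≠ v) (j : Fin n) :
    flipE D u v u j = Function.update (D u) v (D v u) j := by
  unfold flipE
  rw [Function.update_apply]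
  rcases eq_or_ne j v with rfl | h
  · rw [if_pos ⟨rfl, rfl⟩, if_pos rfl]
  · rw [if_neg (fun hh => h hh.2), if_neg (fun hh => huv hh.1), if_neg h]

lemma flip_row_v {D : Fin n → Fin n → ℕ} {u v : Fin n} (huv : u ≠ v) (j : Fin n) :
    flipE D u v v j = Function.update (D v) u (D u v) j := by
  unfold flipE
  rw [Function.update_apply]
  rcases eq_or_ne j u with rfl | h
  · rw [if_neg (fun hh => huv hh.1.symm), if_pos ⟨rfl, rfl⟩, if_pos rfl]
  · rw [if_neg (fun hh => huv hh.1.symm), if_neg (fun hh => h hh.2), if_neg h]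

lemma flip_row_other {D : Fin n → Fin n → ℕ} {u v k : Fin n} (hku : k ≠ u) (hkv : k ≠ v)
    (j : Fin n) : flipE D u v k j = D k j := by
  unfold flipE
  rw [if_neg (fun hh => hku hh.1), if_neg (fun hh => hkv hh.1)]

lemma prod_split {u v : Fin n} (huv : u ≠ v) (f : Fin n → ℕ) :
    ∏ k, f k = (∏ k ∈ Finset.univ \ {u, v}, f k) * (f u * f v) := by
  rw [← Finset.prod_sdiff (Finset.subset_univ {u, v}), Finset.prod_pair huv]

lemma flip_lt {D : Fin n → Fin n → ℕ} (hT : IsTournament D) {u v : Fin n} (huv : u ≠ v)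
    (h1 : D u v = 1) (hd : outdeg D u = outdeg D v) :
    (∏ k, (outdeg (flipE D u v) k + 1)) < ∏ k, (outdeg D k + 1) := by
  have hsum := hT.2 u v huv
  have hvu : D v u = 0 := by omega
  have hu : outdeg (flipE D u v) u + 1 = outdeg D u := by
    unfold outdeg
    rw [Finset.sum_congr rfl (fun j _ => flip_row_u huv j),
      Finset.sum_update_of_mem (Finset.mem_univ v), hvu,
      Finset.sum_eq_sum_sdiff_singleton_add (Finset.mem_univ v) (D u), h1]
    omega
  have hv : outdeg (flipE D u v) v = outdeg D v + 1 := by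
    unfold outdeg
    rw [Finset.sum_congr rfl (fun j _ => flip_row_v huv j),
      Finset.sum_update_of_mem (Finset.mem_univ u), h1,
      Finset.sum_eq_sum_sdiff_singleton_add (Finset.mem_univ u) (D v), hvu]
    omega
  have hk : ∀ k, k ≠ u → k ≠ v → outdeg (flipE D u v) k = outdeg D k := by
    intro k hku hkv
    unfold outdeg
    exact Finset.sum_congr rfl (fun j _ => flip_row_other hku hkv j)
  rw [prod_split huv (fun k => outdeg (flipE D u v) k + 1),
    prod_split huv (fun k => outdeg D k + 1)]
  have hR : Finset.prod (Finset.univ \ {u, v}) (fun k => outdeg (flipE D u v) k + 1)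
      = Finset.prod (Finset.univ \ {u, v}) (fun k => outdeg D k + 1) := by
    refine Finset.prod_congr rfl (fun k hkmem => ?_)
    simp only [Finset.mem_sdiff, Finset.mem_insert, Finset.mem_singleton] at hkmem
    rw [hk k (fun h => hkmem.2 (Or.inl h)) (fun h => hkmem.2 (Or.inr h))]
  rw [hR]
  have hRpos : 0 < Finset.prod (Finset.univ \ {u, v}) (fun k => outdeg D k + 1) :=
    Finset.prod_pos (fun k _ => Nat.succ_pos _)
  refine mul_lt_mul_of_pos_left ?_ hRpos
  have hd1 : 1 ≤ outdeg D u := by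
    have : D u v ≤ outdeg D u := Finset.single_le_sum (fun j _ => Nat.zero_le _) (Finset.mem_univ v)
    omega
  set d := outdeg D u with hdd
  have h2 : outdeg (flipE D u v) u + 1 = d := hu
  have h3 : outdeg (flipE D u v) v + 1 = d + 2 := by rw [hv, ← hd]
  rw [h2, h3]
  nlinarith [hd1]

lemma degree_lt {D : Fin n → Fin n → ℕ} (hT : IsTournament D) (i : Fin n) :
    outdeg D i < n := by
  have key : outdeg D i = ∑ j ∈ Finset.univ \ {i}, D i j := by
    unfold outdeg
    rw [Finset.sum_eq_sum_sdiff_singleton_add (Finset.mem_univ i), hT.1 i]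
    omega
  have hle : ∑ j ∈ Finset.univ \ {i}, D i j ≤ ∑ _j ∈ Finset.univ \ {i}, 1 := by
    refine Finset.sum_le_sum (fun j hj => ?_)
    simp only [Finset.mem_sdiff, Finset.mem_singleton] at hj
    have := hT.2 i j (fun h => hj.2 h.symm)
    omega
  have hcard : (Finset.univ \ {i} : Finset (Fin n)).card = n - 1 := by
    rw [Finset.card_sdiff_of_subset (by simp)]
    simp
  rw [key]
  have := i.pos
  simp only [Finset.sum_const, smul_eq_mul, mul_one, hcard] at hle
  omega

lemma exists_perm {D : Fin n → Fin n → ℕ} (hT : IsTournament D)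
    (hinj : Function.Injective (outdeg D)) :
    ∃ σ : Equiv.Perm (Fin n), ∀ k, outdeg D k = (σ k : ℕ) := by
  have ginj : Function.Injective (fun k => (⟨outdeg D k, degree_lt hT k⟩ : Fin n)) := by
    intro a b hab
    exact hinj (by simpa [Fin.mk.injEq] using hab)
  exact ⟨Equiv.ofBijective _ (Finite.injective_iff_bijective.mp ginj), fun k => rfl⟩

lemma prod_of_perm {D : Fin n → Fin n → ℕ} (σ : Equiv.Perm (Fin n))
    (h : ∀ k, outdeg D k = (σ k : ℕ)) :
    (∏ k, (outdeg D k + 1)) = n.factorial := by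
  calc (∏ k, (outdeg D k + 1)) = ∏ k, ((σ k : ℕ) + 1) :=
        Finset.prod_congr rfl (fun k _ => by rw [h k])
    _ = ∏ k : Fin n, ((k : ℕ) + 1) := Equiv.prod_comp σ (fun k => (k : ℕ) + 1)
    _ = ∏ k ∈ Finset.range n, (k + 1) := Fin.prod_univ_eq_prod_range _ n
    _ = n.factorial := Finset.prod_range_add_one_eq_factorial n

lemma main_lemma : ∀ (N : ℕ) (D : Fin n → Fin n → ℕ), IsTournament D →
    (∏ k, (outdeg D k + 1)) ≤ N →
    n.factorial ≤ (∏ k, (outdeg D k + 1)) ∧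
      ((∏ k, (outdeg D k + 1)) = n.factorial → Function.Injective (outdeg D)) := by
  intro N
  induction N with
  | zero =>
    intro D _ hle
    have : 0 < ∏ k, (outdeg D k + 1) := Finset.prod_pos (fun k _ => Nat.succ_pos _)
    omega
  | succ N ih =>
    intro D hT hle
    by_cases hinj : Function.Injective (outdeg D)
    · obtain ⟨σ, hσ⟩ := exists_perm hT hinj
      have heq := prod_of_perm σ hσ
      exact ⟨heq.ge, fun _ => hinj⟩
    · rw [Function.not_injective_iff] at hinj
      obtain ⟨u, v, hd, huv⟩ := hinj
      have hsum := hT.2 u v huv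
      have hlt : ∃ D' : Fin n → Fin n → ℕ, IsTournament D' ∧
          (∏ k, (outdeg D' k + 1)) < ∏ k, (outdeg D k + 1) := by
        rcases Nat.lt_or_ge (D u v) 1 with h | h
        · have h1 : D v u = 1 := by omega
          exact ⟨flipE D v u, flip_isT hT huv.symm, flip_lt hT huv.symm h1 hd.symm⟩
        · have h1 : D u v = 1 := by omega
          exact ⟨flipE D u v, flip_isT hT huv, flip_lt hT huv h1 hd⟩
      obtain ⟨D', hT', hlt'⟩ := hlt
      have h2 : (∏ k, (outdeg D' k + 1)) ≤ N := by omega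
      obtain ⟨ih1, -⟩ := ih D' hT' h2
      have hstrict : n.factorial < ∏ k, (outdeg D k + 1) := lt_of_le_of_lt ih1 hlt'
      exact ⟨hstrict.le, fun h => absurd h (by omega)⟩

end Aux

theorem stmt8 {n : ℕ} (D : Fin n → Fin n → ℕ) (hT : IsTournament D) :
    n.factorial ≤ (∏ k, (outdeg D k + 1)) ∧
      ((∏ k, (outdeg D k + 1)) = n.factorial ↔
        ∃ σ : Equiv.Perm (Fin n), ∀ k, outdeg D k = (σ k : ℕ)) := by
  obtain ⟨h1, h2⟩ := main_lemma (∏ k, (outdeg D k + 1)) D hT le_rfl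
  refine ⟨h1, ⟨fun h => exists_perm hT (h2 h), fun ⟨σ, hσ⟩ => prod_of_perm σ hσ⟩⟩
end

section
/- Let T_n be an Eulerian tournament on n vertices. Then arb(T_n) ≤ (1/n)·(n(n+1)/4)^{(n-1)/2}. -/
open Matrix BigOperators Finset Polynomial

namespace Stmt12Aux

variable {d : ℕ}

/-- the real Laplacian -/
def Lr (D : Fin (2*d+1) → Fin (2*d+1) → ℕ) : Matrix (Fin (2*d+1)) (Fin (2*d+1)) ℝ :=
  Matrix.of fun i j => ((lap D i j : ℤ) : ℝ)

/-- all ones matrix -/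
def Jm (d : ℕ) : Matrix (Fin (2*d+1)) (Fin (2*d+1)) ℝ := Matrix.of fun _ _ => 1

noncomputable def Am (D : Fin (2*d+1) → Fin (2*d+1) → ℕ) : Matrix (Fin (2*d+1)) (Fin (2*d+1)) ℝ :=
  Lr D + (((2*d+1 : ℕ) : ℝ))⁻¹ • Jm d

lemma Lr_apply (D : Fin (2*d+1) → Fin (2*d+1) → ℕ) (i j : Fin (2*d+1)) :
    Lr D i j = if i = j then ((outdeg D i : ℕ) : ℝ) else -((D i j : ℕ) : ℝ) := by
  simp only [Lr, lap, Matrix.of_apply]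
  split <;> simp

lemma rowsum (D : Fin (2*d+1) → Fin (2*d+1) → ℕ) (hT : IsTournament D) (i : Fin (2*d+1)) :
    ∑ j, Lr D i j = 0 := by
  have h : ∀ j, Lr D i j
      = (if j = i then ((outdeg D i : ℝ) + (D i j : ℝ)) else 0) - (D i j : ℝ) := by
    intro j
    rcases eq_or_ne i j with h | h
    · subst h; simp [Lr_apply, hT.1 i]
    · simp [Lr_apply, h, Ne.symm h]
  rw [Finset.sum_congr rfl fun j _ => h j, Finset.sum_sub_distrib,
    Finset.sum_ite_eq' Finset.univ i]
  have : ∑ j, ((D i j : ℝ)) = (outdeg D i : ℝ) := by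
    rw [outdeg]; push_cast; ring
  simp [this, hT.1 i]

lemma sumD_col (D : Fin (2*d+1) → Fin (2*d+1) → ℕ) (hT : IsTournament D)
    (hreg : ∀ i, outdeg D i = d) (j : Fin (2*d+1)) : ∑ i, D i j = d := by
  have h1 : ∑ i ∈ Finset.univ.erase j, (D i j + D j i) = 2*d := by
    rw [Finset.sum_congr rfl fun i hi => hT.2 i j (Finset.ne_of_mem_erase hi)]
    simp [Finset.card_erase_of_mem]
  have h2 : ∑ i ∈ Finset.univ.erase j, D j i = d := by
    have := hreg j
    rw [outdeg, ← Finset.add_sum_erase _ _ (Finset.mem_univ j), hT.1 j, zero_add] at this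
    exact this
  rw [Finset.sum_add_distrib, h2] at h1
  have h3 : ∑ i ∈ Finset.univ.erase j, D i j = d := by omega
  rw [← Finset.add_sum_erase _ _ (Finset.mem_univ j), hT.1 j, zero_add, h3]

lemma colsum (D : Fin (2*d+1) → Fin (2*d+1) → ℕ) (hT : IsTournament D)
    (hreg : ∀ i, outdeg D i = d) (j : Fin (2*d+1)) :
    ∑ i, Lr D i j = 0 := by
  have h : ∀ i, Lr D i j
      = (if i = j then ((outdeg D i : ℝ) + (D i j : ℝ)) else 0) - (D i j : ℝ) := by
    intro i
    rcases eq_or_ne i j with h | h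
    · subst h; simp [Lr_apply, hT.1 i]
    · simp [Lr_apply, h]
  rw [Finset.sum_congr rfl fun i _ => h i, Finset.sum_sub_distrib,
    Finset.sum_ite_eq' Finset.univ j]
  have hsum : ∑ i, ((D i j : ℝ)) = (d : ℝ) := by
    rw_mod_cast [sumD_col D hT hreg j]
  simp [hsum, hT.1 j, hreg j]


lemma Arow (D : Fin (2*d+1) → Fin (2*d+1) → ℕ) (hT : IsTournament D) (i : Fin (2*d+1)) :
    ∑ j, Am D i j = 1 := by
  have hn : ((2*d+1:ℕ) : ℝ) ≠ 0 := by positivity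
  simp only [Am, Matrix.add_apply, Matrix.smul_apply, Jm, Matrix.of_apply, smul_eq_mul, mul_one]
  rw [Finset.sum_add_distrib, rowsum D hT i, Finset.sum_const, Finset.card_univ,
    Fintype.card_fin, zero_add, nsmul_eq_mul]
  field_simp

lemma Acol (D : Fin (2*d+1) → Fin (2*d+1) → ℕ) (hT : IsTournament D)
    (hreg : ∀ i, outdeg D i = d) (j : Fin (2*d+1)) :
    ∑ i, Am D i j = 1 := by
  have hn : ((2*d+1:ℕ) : ℝ) ≠ 0 := by positivity
  simp only [Am, Matrix.add_apply, Matrix.smul_apply, Jm, Matrix.of_apply, smul_eq_mul, mul_one]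
  rw [Finset.sum_add_distrib, colsum D hT hreg j, Finset.sum_const, Finset.card_univ,
    Fintype.card_fin, zero_add, nsmul_eq_mul]
  field_simp

def eEquiv {m : ℕ} (v : Fin m) : ({j : Fin m // j ≠ v} ⊕ Unit) ≃ Fin m where
  toFun := Sum.elim (fun x => x.1) (fun _ => v)
  invFun := fun x => if h : x = v then Sum.inr () else Sum.inl ⟨x, h⟩
  left_inv := by
    rintro (⟨x, hx⟩ | ⟨⟩)
    · simp [hx]
    · simp
  right_inv := by
    intro x
    by_cases h : x = v
    · simp [h]
    · simp [h]

@[simp] lemma eEquiv_inl {m : ℕ} (v : Fin m) (x : {j : Fin m // j ≠ v}) :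
    eEquiv v (Sum.inl x) = x.1 := rfl

@[simp] lemma eEquiv_inr {m : ℕ} (v : Fin m) (u : Unit) :
    eEquiv v (Sum.inr u) = v := rfl

lemma detA_eq (D : Fin (2*d+1) → Fin (2*d+1) → ℕ) (hT : IsTournament D)
    (hreg : ∀ i, outdeg D i = d) (v : Fin (2*d+1)) :
    (Am D).det = ((2*d+1:ℕ) : ℝ) * (arb D v : ℝ) := by
  classical
  have hn : ((2*d+1:ℕ) : ℝ) ≠ 0 := by positivity
  set A := Am D with hA
  set w : Fin (2*d+1) → ℝ := fun j => if j = v then 0 else 1 with hw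
  set u1 : Fin (2*d+1) → ℝ := Pi.single v 1 with hu1
  set u2 : Fin (2*d+1) → ℝ := Pi.single v (-(((2*d+1:ℕ):ℝ))⁻¹) with hu2
  set E : Matrix (Fin (2*d+1)) (Fin (2*d+1)) ℝ := 1 + vecMulVec u1 w with hE
  set F : Matrix (Fin (2*d+1)) (Fin (2*d+1)) ℝ := 1 + vecMulVec w u1 with hF
  set G : Matrix (Fin (2*d+1)) (Fin (2*d+1)) ℝ := 1 + vecMulVec u2 w with hG
  set B1 : Matrix (Fin (2*d+1)) (Fin (2*d+1)) ℝ :=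
    Matrix.of fun i j => if i = v then 1 else A i j with hB1d
  set B2 : Matrix (Fin (2*d+1)) (Fin (2*d+1)) ℝ :=
    Matrix.of fun i j => if j = v then (if i = v then ((2*d+1:ℕ):ℝ) else 1)
      else (if i = v then 1 else A i j) with hB2d
  set B3 : Matrix (Fin (2*d+1)) (Fin (2*d+1)) ℝ :=
    Matrix.of fun i j => if i = v then (if j = v then ((2*d+1:ℕ):ℝ) else 0)
      else (if j = v then 1 else Lr D i j) with hB3d
  have hwv : w v = 0 := by simp [hw]
  have hu1v : ∀ k, u1 k = if k = v then 1 else 0 := by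
    intro k; simp [hu1, Pi.single_apply]
  have hu2v : ∀ k, u2 k = if k = v then -(((2*d+1:ℕ):ℝ))⁻¹ else 0 := by
    intro k; simp [hu2, Pi.single_apply]
  have hdetE : E.det = 1 := by
    rw [hE, vecMulVec_eq Unit, det_one_add_replicateCol_mul_replicateRow]
    have : w ⬝ᵥ u1 = 0 := by
      rw [hu1, dotProduct_single, hwv, zero_mul]
    rw [this, add_zero]
  have hdetF : F.det = 1 := by
    rw [hF, vecMulVec_eq Unit, det_one_add_replicateCol_mul_replicateRow]
    have : u1 ⬝ᵥ w = 0 := by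
      rw [hu1, single_dotProduct, hwv, mul_zero]
    rw [this, add_zero]
  have hdetG : G.det = 1 := by
    rw [hG, vecMulVec_eq Unit, det_one_add_replicateCol_mul_replicateRow]
    have : w ⬝ᵥ u2 = 0 := by
      rw [hu2, dotProduct_single, hwv, zero_mul]
    rw [this, add_zero]
  -- step 1
  have hEA : E * A = B1 := by
    ext i j
    rw [hE, Matrix.add_mul, Matrix.one_mul]
    simp only [Matrix.add_apply, Matrix.mul_apply, vecMulVec_apply, hB3d, Matrix.of_apply]
    rcases eq_or_ne i v with hi | hi
    · have hterm : ∀ k : Fin (2*d+1), u1 i * w k * A k j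
          = A k j - (if k = v then A k j else 0) := by
        intro k
        rcases eq_or_ne k v with hk | hk
        · subst hk; simp [hw, hi, hu1v]
        · simp [hw, hk, hi, hu1v]
      rw [Finset.sum_congr rfl fun k _ => hterm k, Finset.sum_sub_distrib,
        Finset.sum_ite_eq' Finset.univ, Acol D hT hreg j]
      simp [hB1d, hi]
    · have hterm : ∀ k : Fin (2*d+1), u1 i * w k * A k j = 0 := by
        intro k; simp [hu1v, hi]
      rw [Finset.sum_congr rfl fun k _ => hterm k]
      simp [hi, hB1d]
  -- step 2
  have hB1F : B1 * F = B2 := by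
    ext i j
    rw [hF, Matrix.mul_add, Matrix.mul_one]
    simp only [Matrix.add_apply, Matrix.mul_apply, vecMulVec_apply, hB2d, Matrix.of_apply]
    have hrowB1 : ∑ k, B1 i k = if i = v then ((2*d+1:ℕ):ℝ) else 1 := by
      rcases eq_or_ne i v with hi | hi
      · simp [hB1d, hi, Finset.card_univ]
      · simp only [hB1d, Matrix.of_apply, if_neg hi]
        rw [Arow D hT i]
    rcases eq_or_ne j v with hj | hj
    · rw [hj]
      have hterm : ∀ k : Fin (2*d+1), B1 i k * (w k * u1 v)
          = B1 i k - (if k = v then B1 i k else 0) := by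
        intro k
        rcases eq_or_ne k v with hk | hk
        · subst hk; simp [hw, hu1v]
        · simp [hw, hk, hu1v]
      rw [Finset.sum_congr rfl fun k _ => hterm k, Finset.sum_sub_distrib,
        Finset.sum_ite_eq' Finset.univ, hrowB1]
      simp
    · have hterm : ∀ k : Fin (2*d+1), B1 i k * (w k * u1 j) = 0 := by
        intro k; simp [hu1v, hj]
      rw [Finset.sum_congr rfl fun k _ => hterm k]
      simp [hj, hB1d]
  -- step 3
  have hB2G : B2 * G = B3 := by
    ext i j
    rw [hG, Matrix.mul_add, Matrix.mul_one]
    simp only [Matrix.add_apply, Matrix.mul_apply, vecMulVec_apply, hB3d, Matrix.of_apply]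
    have hsum : ∑ k, B2 i k * (u2 k * w j)
        = B2 i v * (-(((2*d+1:ℕ):ℝ))⁻¹) * w j := by
      rw [Finset.sum_eq_single v]
      · rw [hu2v]; simp [mul_assoc]
      · intro k _ hk; simp [hu2v, hk]
      · simp
    rw [hsum]
    rcases eq_or_ne j v with hj | hj
    · rw [hj, hwv]
      simp [hB2d]
    · have hwj : w j = 1 := by simp [hw, hj]
      rcases eq_or_ne i v with hi | hi
      · rw [hi, hwj]
        simp only [hB2d, Matrix.of_apply, if_neg hj, if_pos rfl, if_true]
        field_simp
        ring
      · rw [hwj]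
        simp only [hB2d, Matrix.of_apply, if_neg hj, if_neg hi, if_pos rfl, hA, Am,
          Matrix.add_apply, Matrix.smul_apply, Jm, smul_eq_mul, mul_one, if_true]
        ring
  -- determinant of B3 via blocks
  have hsub : B3.submatrix (eEquiv v) (eEquiv v) = fromBlocks
      (Matrix.of fun i j : {j : Fin (2*d+1) // j ≠ v} => Lr D i.1 j.1)
      (Matrix.of fun (_ : {j : Fin (2*d+1) // j ≠ v}) (_ : Unit) => (1:ℝ))
      0
      (Matrix.of fun (_ _ : Unit) => ((2*d+1:ℕ):ℝ)) := by
    ext i j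
    cases i with
    | inl x =>
      cases j with
      | inl y => simp [hB3d, Matrix.submatrix_apply, fromBlocks, x.2, y.2]
      | inr u => simp [hB3d, Matrix.submatrix_apply, fromBlocks, x.2]
    | inr u =>
      cases j with
      | inl y => simp [hB3d, Matrix.submatrix_apply, fromBlocks, y.2]
      | inr u' => simp [hB3d, Matrix.submatrix_apply, fromBlocks]
  have hminor : (Matrix.of fun i j : {j : Fin (2*d+1) // j ≠ v} => Lr D i.1 j.1).det
      = (arb D v : ℝ) := by
    have heq : (Matrix.of fun i j : {j : Fin (2*d+1) // j ≠ v} => Lr D i.1 j.1)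
        = (Int.castRingHom ℝ).mapMatrix
          ((lap D).submatrix (fun i : {j : Fin (2*d+1) // j ≠ v} => (i : Fin (2*d+1)))
            (fun j : {j : Fin (2*d+1) // j ≠ v} => (j : Fin (2*d+1)))) := by
      ext i j
      simp [Lr, Matrix.submatrix_apply]
    rw [heq, ← RingHom.map_det]
    simp [arb]
  have hdetB3 : B3.det = ((2*d+1:ℕ):ℝ) * (arb D v : ℝ) := by
    rw [← Matrix.det_submatrix_equiv_self (eEquiv v) B3, hsub, Matrix.det_fromBlocks_zero₂₁,
      hminor, Matrix.det_unique]
    simp [mul_comm]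
  have hprod : (E * A * F * G).det = B3.det := by rw [hEA, hB1F, hB2G]
  rw [Matrix.det_mul, Matrix.det_mul, Matrix.det_mul, hdetE, hdetF, hdetG] at hprod
  rw [one_mul, mul_one, mul_one] at hprod
  rw [hprod, hdetB3]


lemma hD01 (D : Fin (2*d+1) → Fin (2*d+1) → ℕ) (hT : IsTournament D) (a b : Fin (2*d+1)) :
    ((D a b : ℝ)) * ((D a b : ℝ)) = (D a b : ℝ) := by
  rcases eq_or_ne a b with h | h
  · subst h; simp [hT.1 a]
  · have h1 := hT.2 a b h
    have : D a b = 0 ∨ D a b = 1 := by omega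
    rcases this with h2 | h2 <;> simp [h2]

lemma rowsq (D : Fin (2*d+1) → Fin (2*d+1) → ℕ) (hT : IsTournament D)
    (hreg : ∀ i, outdeg D i = d) (i : Fin (2*d+1)) :
    ∑ k, Lr D i k * Lr D i k = (d:ℝ)^2 + d := by
  have h : ∀ k, Lr D i k * Lr D i k
      = (if k = i then ((d:ℝ)^2 - (D i k : ℝ)) else 0) + (D i k : ℝ) := by
    intro k
    rcases eq_or_ne i k with h | h
    · subst h
      simp [Lr_apply, hT.1 i, hreg i]
      ring
    · simp only [Lr_apply, if_neg h, if_neg (Ne.symm h)]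
      rw [neg_mul_neg, hD01 D hT, zero_add]
  rw [Finset.sum_congr rfl fun k _ => h k, Finset.sum_add_distrib,
    Finset.sum_ite_eq' Finset.univ]
  have hout : ∑ k, ((D i k : ℝ)) = (d : ℝ) := by
    have h := hreg i
    rw [outdeg] at h
    exact_mod_cast h
  rw [hout]
  simp [hT.1 i]

lemma SS (D : Fin (2*d+1) → Fin (2*d+1) → ℕ) (hT : IsTournament D) :
    Am D * (Am D)ᴴ = Lr D * (Lr D)ᴴ + (((2*d+1:ℕ):ℝ))⁻¹ • Jm d := by
  have hn : ((2*d+1:ℕ) : ℝ) ≠ 0 := by positivity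
  ext i j
  simp only [Matrix.mul_apply, Matrix.conjTranspose_apply, star_trivial, Matrix.add_apply,
    Matrix.smul_apply, Jm, Matrix.of_apply, smul_eq_mul, mul_one, Am]
  set c := (((2*d+1:ℕ):ℝ))⁻¹ with hc
  have hexp : ∀ k : Fin (2*d+1), (Lr D i k + c) * (Lr D j k + c)
      = Lr D i k * Lr D j k + (c * Lr D i k + (c * Lr D j k + c * c)) := by
    intro k; ring
  rw [Finset.sum_congr rfl fun k _ => hexp k, Finset.sum_add_distrib, Finset.sum_add_distrib,
    Finset.sum_add_distrib, ← Finset.mul_sum, ← Finset.mul_sum, rowsum D hT i, rowsum D hT j,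
    Finset.sum_const, Finset.card_univ, Fintype.card_fin, nsmul_eq_mul]
  rw [hc]
  field_simp
  ring

lemma traceS (D : Fin (2*d+1) → Fin (2*d+1) → ℕ) (hT : IsTournament D)
    (hreg : ∀ i, outdeg D i = d) :
    (Am D * (Am D)ᴴ).trace = ((2*d+1:ℕ):ℝ) * ((d:ℝ)*((d:ℝ)+1)) + 1 := by
  have hn : ((2*d+1:ℕ) : ℝ) ≠ 0 := by positivity
  rw [SS D hT, Matrix.trace_add, Matrix.trace_smul, Matrix.trace]
  have hdiag : ∀ i, (Lr D * (Lr D)ᴴ).diag i = (d:ℝ)^2 + d := by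
    intro i
    simp only [Matrix.diag_apply, Matrix.mul_apply, Matrix.conjTranspose_apply, star_trivial]
    exact rowsq D hT hreg i
  rw [Finset.sum_congr rfl fun i _ => hdiag i, Finset.sum_const, Finset.card_univ,
    Fintype.card_fin, nsmul_eq_mul]
  have htrJ : (Jm d).trace = ((2*d+1:ℕ):ℝ) := by
    simp [Matrix.trace, Jm, Matrix.diag]
  rw [htrJ, smul_eq_mul, inv_mul_cancel₀ hn]
  ring

lemma Sone (D : Fin (2*d+1) → Fin (2*d+1) → ℕ) (hT : IsTournament D)
    (hreg : ∀ i, outdeg D i = d) :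
    (Am D * (Am D)ᴴ) *ᵥ (fun _ => (1:ℝ)) = fun _ => 1 := by
  have hn : ((2*d+1:ℕ) : ℝ) ≠ 0 := by positivity
  rw [SS D hT]
  funext i
  simp only [Matrix.mulVec, dotProduct, Pi.add_apply, Matrix.add_apply, Matrix.smul_apply,
    Jm, Matrix.of_apply, smul_eq_mul, mul_one, Matrix.mul_apply, Matrix.conjTranspose_apply,
    star_trivial]
  rw [Finset.sum_add_distrib]
  have h1 : ∑ j, ∑ k, Lr D i k * Lr D j k = 0 := by
    rw [Finset.sum_comm]
    apply Finset.sum_eq_zero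
    intro k _
    rw [← Finset.mul_sum, colsum D hT hreg k, mul_zero]
  rw [h1, Finset.sum_const, Finset.card_univ, Fintype.card_fin, nsmul_eq_mul, zero_add,
    mul_inv_cancel₀ hn]

lemma trace_eq_sum_eig {m : Type*} [Fintype m] [DecidableEq m] {S : Matrix m m ℝ}
    (hS : S.IsHermitian) : S.trace = ∑ i, hS.eigenvalues i := by
  nth_rewrite 1 [hS.spectral_theorem]
  rw [Unitary.conjStarAlgAut_apply, Matrix.trace_mul_cycle, Unitary.coe_star_mul_self, Matrix.one_mul,
    Matrix.trace_diagonal]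
  simp

lemma exists_eig_one {m : Type*} [Fintype m] [DecidableEq m] [Nonempty m]
    {S : Matrix m m ℝ} (hS : S.IsHermitian)
    (h : S *ᵥ (fun _ => (1:ℝ)) = fun _ => 1) : ∃ i, hS.eigenvalues i = 1 := by
  classical
  set U : Matrix m m ℝ := (hS.eigenvectorUnitary : Matrix m m ℝ) with hU
  set Dg : Matrix m m ℝ := Matrix.diagonal (RCLike.ofReal ∘ hS.eigenvalues) with hDg
  set wv : m → ℝ := star U *ᵥ (fun _ => 1) with hwv
  have hUU : star U * U = 1 := by
    rw [hU]; exact Unitary.coe_star_mul_self hS.eigenvectorUnitary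
  have hUUw : U * star U = 1 := by
    rw [hU]; exact Unitary.coe_mul_star_self hS.eigenvectorUnitary
  have hwn : wv ≠ 0 := by
    intro h0
    have hone : (fun _ => (1:ℝ)) = U *ᵥ wv := by
      rw [hwv, mulVec_mulVec, hUUw, one_mulVec]
    rw [h0, mulVec_zero] at hone
    exact one_ne_zero (congrFun hone (Classical.arbitrary m))
  have h2 : star U * S = Dg * star U := by
    nth_rewrite 1 [hS.spectral_theorem]
    rw [Unitary.conjStarAlgAut_apply, ← Matrix.mul_assoc, ← Matrix.mul_assoc, hUU, Matrix.one_mul, hDg, hU]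
  have hDw : Dg *ᵥ wv = wv := by
    calc Dg *ᵥ wv = (Dg * star U) *ᵥ (fun _ => 1) := by rw [hwv, mulVec_mulVec]
    _ = (star U * S) *ᵥ (fun _ => 1) := by rw [h2]
    _ = star U *ᵥ (S *ᵥ fun _ => 1) := by rw [← mulVec_mulVec]
    _ = wv := by rw [h, hwv]
  obtain ⟨i, hi⟩ := Function.ne_iff.mp hwn
  refine ⟨i, ?_⟩
  have hcf := congrFun hDw i
  rw [hDg, Matrix.mulVec_diagonal] at hcf
  have hmul : (hS.eigenvalues i) * wv i = 1 * wv i := by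
    simpa [RCLike.ofReal_real_eq_id] using hcf
  exact mul_right_cancel₀ hi hmul

lemma amgm_aux {m : Type*} [Fintype m] [DecidableEq m] (μ : m → ℝ) (hnn : ∀ i, 0 ≤ μ i)
    (i₀ : m) (h1 : μ i₀ = 1) {k : ℕ} (hk : 0 < k) (hcard : (Finset.univ.erase i₀).card = k)
    {c : ℝ} (hsum : ∑ i, μ i = k * c + 1) : ∏ i, μ i ≤ c ^ k := by
  classical
  set s := Finset.univ.erase i₀ with hs
  have hkR : ((k:ℝ)) ≠ 0 := by positivity
  have hks : ∑ i ∈ s, μ i = k * c := by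
    have h := Finset.add_sum_erase Finset.univ μ (Finset.mem_univ i₀)
    rw [hsum, h1] at h
    linarith
  have hw : ∑ _i ∈ s, ((k:ℝ))⁻¹ = 1 := by
    rw [Finset.sum_const, hcard, nsmul_eq_mul]
    field_simp
  have hgm := Real.geom_mean_le_arith_mean_weighted s (fun _ => ((k:ℝ))⁻¹) μ
      (fun i _ => by positivity) hw (fun i _ => hnn i)
  have hrhs : ∑ i ∈ s, ((k:ℝ))⁻¹ * μ i = c := by
    rw [← Finset.mul_sum, hks, ← mul_assoc, inv_mul_cancel₀ hkR, one_mul]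
  rw [hrhs] at hgm
  have hbase : (0:ℝ) ≤ ∏ i ∈ s, μ i ^ (((k:ℝ))⁻¹) :=
    Finset.prod_nonneg fun i _ => Real.rpow_nonneg (hnn i) _
  have hpow := pow_le_pow_left₀ hbase hgm k
  have heq : (∏ i ∈ s, μ i ^ (((k:ℝ))⁻¹)) ^ k = ∏ i ∈ s, μ i := by
    rw [← Finset.prod_pow]
    refine Finset.prod_congr rfl fun i _ => ?_
    rw [← Real.rpow_natCast (μ i ^ (((k:ℝ))⁻¹)) k, ← Real.rpow_mul (hnn i),
      inv_mul_cancel₀ hkR, Real.rpow_one]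
  rw [heq] at hpow
  calc ∏ i, μ i = μ i₀ * ∏ i ∈ s, μ i :=
        (Finset.mul_prod_erase Finset.univ μ (Finset.mem_univ i₀)).symm
  _ = ∏ i ∈ s, μ i := by rw [h1, one_mul]
  _ ≤ c ^ k := hpow

end Stmt12Aux

open Stmt12Aux

theorem stmt12 {d : ℕ} (D : Fin (2 * d + 1) → Fin (2 * d + 1) → ℕ) (hT : IsTournament D)
    (hreg : ∀ i, outdeg D i = d) (v : Fin (2 * d + 1)) :
    (arb D v : ℚ) ≤ (1 / (2 * d + 1 : ℚ)) *
      (((2 * d + 1 : ℚ) * (2 * d + 2 : ℚ)) / 4) ^ d := by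
  classical
  rcases Nat.eq_zero_or_pos d with hd0 | hdpos
  · subst hd0
    haveI : IsEmpty {j : Fin (2*0+1) // j ≠ v} := by
      constructor
      rintro ⟨x, hx⟩
      have h1 := x.isLt
      have h2 := v.isLt
      exact hx (Fin.ext (by omega))
    have harb : arb D v = 1 := Matrix.det_isEmpty
    rw [harb]
    norm_num
  · have hn : (0:ℝ) < ((2*d+1:ℕ):ℝ) := by positivity
    set c : ℝ := (((2*d+1:ℕ):ℝ) * ((d:ℝ)+1))/2 with hc
    have hc0 : 0 ≤ c := by positivity
    set S := Am D * (Am D)ᴴ with hSdef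
    have hPSD : S.PosSemidef := Matrix.posSemidef_self_mul_conjTranspose (Am D)
    have hHerm : S.IsHermitian := hPSD.1
    obtain ⟨i₀, hi₀⟩ := exists_eig_one hHerm (Sone D hT hreg)
    have hsum : ∑ i, hHerm.eigenvalues i = (2*d : ℕ) * c + 1 := by
      rw [← trace_eq_sum_eig hHerm, hSdef, traceS D hT hreg, hc]
      push_cast
      ring
    have hcard : (Finset.univ.erase i₀).card = 2*d := by
      rw [Finset.card_erase_of_mem (Finset.mem_univ i₀), Finset.card_univ, Fintype.card_fin]
      omega
    have hk : 0 < 2*d := by omega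
    have hbound : ∏ i, hHerm.eigenvalues i ≤ c ^ (2*d) :=
      amgm_aux hHerm.eigenvalues (fun i => hPSD.eigenvalues_nonneg i) i₀ hi₀ hk hcard hsum
    have hdetprod : S.det = ∏ i, hHerm.eigenvalues i := by
      rw [hHerm.det_eq_prod_eigenvalues]
      simp [RCLike.ofReal_real_eq_id]
    have hdetS : S.det = (((2*d+1:ℕ):ℝ) * (arb D v : ℝ))^2 := by
      rw [hSdef, Matrix.det_mul, Matrix.det_conjTranspose, star_trivial,
        detA_eq D hT hreg v, sq]
    have hsq : (((2*d+1:ℕ):ℝ) * (arb D v : ℝ))^2 ≤ (c^d)^2 := by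
      rw [← hdetS, ← pow_mul, mul_comm d 2]
      rw [hdetprod]
      exact hbound
    have hle : ((2*d+1:ℕ):ℝ) * (arb D v : ℝ) ≤ c^d := by
      have hcd : (0:ℝ) ≤ c^d := pow_nonneg hc0 d
      nlinarith [hsq, hcd]
    have key : (arb D v : ℝ) ≤ (1/((2*d+1:ℕ):ℝ)) * c^d := by
      rw [div_mul_eq_mul_div, le_div_iff₀ hn, mul_comm ((arb D v : ℝ))]
      linarith
    have key2 : (arb D v : ℝ) ≤ (1 / (2 * (d:ℝ) + 1)) *
        (((2 * (d:ℝ) + 1) * (2 * (d:ℝ) + 2)) / 4) ^ d := by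
      have hrw : ((((2 * (d:ℝ) + 1)) * (2 * (d:ℝ) + 2)) / 4) = c := by
        rw [hc]; push_cast; ring
      rw [hrw]
      have : (1 / (2 * (d:ℝ) + 1)) = (1/((2*d+1:ℕ):ℝ)) := by push_cast; ring
      rw [this]
      exact key
    rw [← Rat.cast_le (K := ℝ)]
    push_cast
    push_cast at key2
    convert key2 using 2
end

section
/- Let T be a d-regular tournament on n = 2d+1 vertices with skew-symmetric adjacency matrix M(T) (entries +1/ -1 off-diagonal, 0 on diagonal, M = A - A^T). Then arb(T) = φ_{M(T)}(n) / (n²·2^{n-1}), where φ_{M(T)}(x) = det(xI - M(T)) is the characteristic polynomial of M(T). -/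
open Matrix BigOperators Finset Polynomial

section aux

variable {n : ℕ} (v : Fin n)

noncomputable instance uniqNe : Unique {j : Fin n // ¬ j ≠ v} :=
  ⟨⟨⟨v, by simp⟩⟩, fun a => Subtype.ext (not_not.mp a.2)⟩

lemma aux_det_row (X : Matrix (Fin n) (Fin n) ℤ) (h0 : ∀ j, j ≠ v → X v j = 0) :
    X.det = X v v * ((X.submatrix (fun i : {j : Fin n // j ≠ v} => (i : Fin n))
      (fun j : {j : Fin n // j ≠ v} => (j : Fin n))).det) := by
  classical
  rw [← Matrix.det_submatrix_equiv_self (Equiv.sumCompl (fun j : Fin n => j ≠ v)) X]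
  have hb : X.submatrix (Equiv.sumCompl (fun j : Fin n => j ≠ v))
      (Equiv.sumCompl (fun j : Fin n => j ≠ v))
      = Matrix.fromBlocks
          (X.submatrix (fun i : {j : Fin n // j ≠ v} => (i : Fin n))
            (fun j : {j : Fin n // j ≠ v} => (j : Fin n)))
          (Matrix.of fun i : {j : Fin n // j ≠ v} => fun _ : {j : Fin n // ¬ j ≠ v} => X i v)
          0
          (Matrix.of fun _ _ : {j : Fin n // ¬ j ≠ v} => X v v) := by
    ext i j
    rcases i with i | i <;> rcases j with j | j
    · simp
    · simp [not_not.mp j.2]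
    · simp [not_not.mp i.2, h0 j j.2]
    · simp [not_not.mp i.2, not_not.mp j.2]
  rw [hb, Matrix.det_fromBlocks_zero₂₁]
  have hD := Matrix.det_unique (Matrix.of fun _ _ : {j : Fin n // ¬ j ≠ v} => X v v)
  rw [hD]
  simp [mul_comm]

lemma aux_det_col (X : Matrix (Fin n) (Fin n) ℤ) (h0 : ∀ i, i ≠ v → X i v = 0) :
    X.det = X v v * ((X.submatrix (fun i : {j : Fin n // j ≠ v} => (i : Fin n))
      (fun j : {j : Fin n // j ≠ v} => (j : Fin n))).det) := by
  have h := aux_det_row v X.transpose (fun j hj => h0 j hj)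
  rw [← Matrix.det_transpose X, h]
  have he : (X.transpose.submatrix (fun i : {j : Fin n // j ≠ v} => (i : Fin n))
      (fun j : {j : Fin n // j ≠ v} => (j : Fin n)))
      = (X.submatrix (fun i : {j : Fin n // j ≠ v} => (i : Fin n))
        (fun j : {j : Fin n // j ≠ v} => (j : Fin n))).transpose := by
    ext i j; simp
  rw [he, Matrix.det_transpose]
  rfl

def Pmat : Matrix (Fin n) (Fin n) ℤ :=
  Matrix.of fun i j => if i = j then 1 else if j = v then -1 else 0

lemma Pmat_mul (X : Matrix (Fin n) (Fin n) ℤ) (i j : Fin n) :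
    (Pmat v * X) i j = X i j + (if i = v then 0 else -X v j) := by
  classical
  rw [Matrix.mul_apply]
  by_cases hiv : i = v
  · have key : ∀ k ∈ Finset.univ, Pmat v i k * X k j = if i = k then X k j else 0 := by
      intro k _
      by_cases h : i = k
      · simp [Pmat, h]
      · simp [Pmat, h, show ¬ k = v from fun hc => h (hiv.trans hc.symm)]
    rw [Finset.sum_congr rfl key, Finset.sum_ite_eq]
    simp [hiv]
  · have key : ∀ k ∈ Finset.univ, Pmat v i k * X k j
        = (if i = k then X k j else 0) + (if k = v then -X k j else 0) := by
      intro k _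
      by_cases h1 : i = k <;> by_cases h2 : k = v
      · exact absurd (h1.trans h2) hiv
      · simp [Pmat, h1, h2, hiv]
      · simp [Pmat, h1, h2, hiv]
      · simp [Pmat, h1, h2, hiv]
    rw [Finset.sum_congr rfl key, Finset.sum_add_distrib, Finset.sum_ite_eq,
      Finset.sum_ite_eq']
    simp [hiv]

lemma Pmat_det : (Pmat v).det = 1 := by
  classical
  rw [aux_det_row v (Pmat v) (fun j hj => by simp [Pmat, (Ne.symm hj : v ≠ j), hj])]
  have h1 : ((Pmat v).submatrix (fun i : {j : Fin n // j ≠ v} => (i : Fin n))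
      (fun j : {j : Fin n // j ≠ v} => (j : Fin n))) = 1 := by
    ext i j
    by_cases h : i = j
    · simp [h, Pmat, Matrix.one_apply]
    · have hij : (i : Fin n) ≠ (j : Fin n) := fun hc => h (Subtype.ext hc)
      simp [Pmat, hij, j.2, Matrix.one_apply_ne h]
  rw [h1, Matrix.det_one]
  simp [Pmat]

end aux

theorem stmt13 {d : ℕ} (D : Fin (2 * d + 1) → Fin (2 * d + 1) → ℕ) (hT : IsTournament D)
    (hreg : ∀ i, outdeg D i = d) (v : Fin (2 * d + 1)) :
    (2 : ℤ) ^ (2 * d) * ((2 * d + 1 : ℕ) : ℤ) ^ 2 * arb D v =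
      (Matrix.of fun i j : Fin (2 * d + 1) =>
        (D i j : ℤ) - (D j i : ℤ)).charpoly.eval ((2 * d + 1 : ℕ) : ℤ) := by
  classical
  obtain ⟨hloop, hpair⟩ := hT
  have hout : ∀ i, (∑ j, (D i j : ℤ)) = d := by
    intro i
    have h := hreg i
    rw [outdeg] at h
    exact_mod_cast congrArg (Nat.cast : ℕ → ℤ) h
  have hpairZ : ∀ i j : Fin (2 * d + 1), i ≠ j → (D i j : ℤ) + (D j i : ℤ) = 1 := by
    intro i j h
    exact_mod_cast congrArg (Nat.cast : ℕ → ℤ) (hpair i j h)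
  have hin : ∀ i, (∑ j, (D j i : ℤ)) = d := by
    intro i
    have h1 : (∑ j, (D j i : ℤ)) + (∑ j, (D i j : ℤ)) = ∑ j, ((D j i : ℤ) + (D i j : ℤ)) :=
      (Finset.sum_add_distrib).symm
    have h2 : ∑ j, ((D j i : ℤ) + (D i j : ℤ)) = 2 * d := by
      rw [← Finset.add_sum_erase _ _ (Finset.mem_univ i)]
      have he : ∀ j ∈ Finset.univ.erase i, ((D j i : ℤ) + (D i j : ℤ)) = 1 := by
        intro j hj
        have hji : j ≠ i := Finset.ne_of_mem_erase hj
        rw [add_comm]; exact hpairZ i j (Ne.symm hji)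
      rw [Finset.sum_congr rfl he]
      simp [hloop i, Finset.card_erase_of_mem, Fintype.card_fin]
      try push_cast
      try ring
    have h3 := h1.trans h2
    rw [hout i] at h3
    linarith
  set N : Matrix (Fin (2 * d + 1)) (Fin (2 * d + 1)) ℤ :=
    Matrix.of (fun i j => if i = j then ((2 * d + 1 : ℕ) : ℤ) else 1 - 2 * D i j) with hN
  have hNsplit : ∀ i j, N i j = (if i = j then (2 * d : ℤ) else 0) + (1 - 2 * D i j) := by
    intro i j
    by_cases h : i = j
    · subst h
      simp [hN, hloop i]
      try push_cast
      try ring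
    · simp [hN, h]
  have hNrow : ∀ i, (∑ j, N i j) = ((2 * d + 1 : ℕ) : ℤ) := by
    intro i
    rw [Finset.sum_congr rfl (fun j _ => hNsplit i j), Finset.sum_add_distrib,
      Finset.sum_ite_eq, Finset.sum_sub_distrib, ← Finset.mul_sum, hout i]
    simp
    try push_cast
    try ring
  have hNcol : ∀ j, (∑ i, N i j) = ((2 * d + 1 : ℕ) : ℤ) := by
    intro j
    have hsum2 : (∑ i, 2 * (D i j : ℤ)) = 2 * d := by rw [← Finset.mul_sum, hin j]
    rw [Finset.sum_congr rfl (fun i _ => hNsplit i j), Finset.sum_add_distrib,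
      Finset.sum_ite_eq', Finset.sum_sub_distrib, hsum2]
    simp
    try push_cast
    try ring
  have hNlap : ∀ i j, N i j - 1 = 2 * lap D i j := by
    intro i j
    by_cases h : i = j
    · subst h
      simp [hN, lap, hreg i]
      try push_cast
      try ring
    · simp [hN, lap, h]
      try ring
  have hchar : (Matrix.of fun i j : Fin (2 * d + 1) =>
      (D i j : ℤ) - (D j i : ℤ)).charpoly.eval ((2 * d + 1 : ℕ) : ℤ) = N.det := by
    rw [Matrix.charpoly, ← Polynomial.coe_evalRingHom, RingHom.map_det]
    congr 1
    ext i j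
    by_cases h : i = j
    · subst h
      simp [Matrix.map_apply, hN]
    · simp [Matrix.map_apply, Matrix.charmatrix_apply_ne _ _ _ h, hN, h]
      have := hpairZ i j h
      linarith
  set X₂ : Matrix (Fin (2 * d + 1)) (Fin (2 * d + 1)) ℤ :=
    N.updateRow v (fun _ => (1 : ℤ)) with hX₂
  have h12 : N.det = ((2 * d + 1 : ℕ) : ℤ) * X₂.det := by
    have hrow : (∑ k, (1 : ℤ) • N k) = (((2 * d + 1 : ℕ) : ℤ) • fun _ => (1 : ℤ)) := by
      funext j
      simp [Finset.sum_apply, hNcol j]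
      exact (Finset.sum_apply j Finset.univ (fun x => N x)).trans (by simpa using hNcol j)
    have e2 := Matrix.det_updateRow_sum N v (fun _ => (1 : ℤ))
    rw [hrow, Matrix.det_updateRow_smul] at e2
    simpa [hX₂] using e2.symm
  set X₃ : Matrix (Fin (2 * d + 1)) (Fin (2 * d + 1)) ℤ := Pmat v * X₂ with hX₃
  have h23 : X₂.det = X₃.det := by
    rw [hX₃, Matrix.det_mul, Pmat_det, one_mul]
  have hX3 : ∀ i j, X₃ i j = if i = v then 1 else N i j - 1 := by
    intro i j
    rw [hX₃, Pmat_mul]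
    by_cases hi : i = v
    · simp [hi, hX₂, Matrix.updateRow_self]
    · simp [hi, hX₂, Matrix.updateRow_ne hi, Matrix.updateRow_self]
      ring
  set X₄ : Matrix (Fin (2 * d + 1)) (Fin (2 * d + 1)) ℤ :=
    X₃.updateCol v (fun k => ∑ i, (1 : ℤ) • X₃ k i) with hX₄
  have h34 : X₃.det = X₄.det := by
    have := Matrix.det_updateCol_sum X₃ v (fun _ => (1 : ℤ))
    simpa [hX₄] using this.symm
  have hX4col : ∀ i, i ≠ v → X₄ i v = 0 := by
    intro i hi
    rw [hX₄, Matrix.updateCol_self]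
    have : (∑ k, (1 : ℤ) • X₃ i k) = ∑ k, (N i k - 1) := by
      refine Finset.sum_congr rfl fun k _ => ?_
      rw [one_smul, hX3 i k, if_neg hi]
    rw [this, Finset.sum_sub_distrib, hNrow i]
    simp
  have hX4vv : X₄ v v = ((2 * d + 1 : ℕ) : ℤ) := by
    rw [hX₄, Matrix.updateCol_self]
    have : (∑ k, (1 : ℤ) • X₃ v k) = ∑ k : Fin (2 * d + 1), (1 : ℤ) := by
      refine Finset.sum_congr rfl fun k _ => ?_
      rw [one_smul, hX3 v k, if_pos rfl]
    rw [this]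
    simp
  have hsub : (X₄.submatrix (fun i : {j : Fin (2 * d + 1) // j ≠ v} => (i : Fin (2 * d + 1)))
      (fun j : {j : Fin (2 * d + 1) // j ≠ v} => (j : Fin (2 * d + 1))))
      = (2 : ℤ) • ((lap D).submatrix (fun i : {j : Fin (2 * d + 1) // j ≠ v} => (i : Fin (2 * d + 1)))
        (fun j : {j : Fin (2 * d + 1) // j ≠ v} => (j : Fin (2 * d + 1)))) := by
    ext i j
    rw [Matrix.submatrix_apply, hX₄, Matrix.updateCol_ne j.2, hX3 _ _, if_neg i.2]
    rw [hNlap]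
    simp
  have hcard : Fintype.card {j : Fin (2 * d + 1) // j ≠ v} = 2 * d := by
    simp [Fintype.card_subtype_compl, Fintype.card_subtype_eq]
  have h45 : X₄.det = ((2 * d + 1 : ℕ) : ℤ) * ((2 : ℤ) ^ (2 * d) * arb D v) := by
    rw [aux_det_col v X₄ hX4col, hX4vv, hsub, Matrix.det_smul, hcard, arb]
  rw [hchar, h12, h23, h34, h45]
  ring
end

section
/- For every odd positive integer n, the characteristic polynomial of the skew-symmetric adjacency matrix of the swirl tournament SW_n equals (1/2)·((x+1)^n + (x-1)^n). -/
open Matrix BigOperators Finset Polynomial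

section Aux

/-- powers of a root of unity depend only on exponent mod N -/
private lemma pow_of_modeq {N : ℕ} {ω : ℂ} (h1 : ω ^ N = 1) {a b : ℕ}
    (h : a % N = b % N) : ω ^ a = ω ^ b := by
  have key : ∀ c : ℕ, ω ^ c = ω ^ (c % N) := by
    intro c
    conv_lhs => rw [← Nat.mod_add_div c N]
    rw [pow_add, pow_mul, h1, one_pow, mul_one]
  rw [key a, key b, h]

/-- determinant of a circulant matrix over ℂ as a product over roots of unity -/
private lemma det_circulant_eq {N : ℕ} [NeZero N] {ω : ℂ} (hω : IsPrimitiveRoot ω N)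
    (v : Fin N → ℂ) :
    (Matrix.circulant v).det
      = ∏ j : Fin N, ∑ m : Fin N, v m * ω ^ ((m : ℕ) * (j : ℕ)) := by
  have h1 : ω ^ N = 1 := hω.pow_eq_one
  set u : Fin N → ℂ := fun i => ω ^ ((0 - i : Fin N) : ℕ) with hu
  set V := Matrix.vandermonde u with hV
  have key : Matrix.circulant v * V
      = V * Matrix.diagonal (fun j : Fin N => ∑ m : Fin N, v m * ω ^ ((m : ℕ) * (j : ℕ))) := by
    ext i j
    rw [Matrix.mul_apply, Matrix.mul_diagonal, ← Equiv.sum_comp (Equiv.subLeft i)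
      (fun k => Matrix.circulant v i k * V k j), Finset.mul_sum]
    refine Finset.sum_congr rfl fun m _ => ?_
    simp only [Equiv.subLeft_apply, Matrix.circulant_apply, sub_sub_cancel, hV,
      Matrix.vandermonde, hu, Matrix.of_apply]
    rw [show (0 - (i - m) : Fin N) = m - i by rw [zero_sub, neg_sub], ← pow_mul]
    have hmod : (((m - i : Fin N) : ℕ) * (j : ℕ)) % N
        = (((0 - i : Fin N) : ℕ) * (j : ℕ) + (m : ℕ) * (j : ℕ)) % N := by
      have hsub : ((0 - i : Fin N) + m) = m - i := by
        rw [zero_sub]; exact neg_add_eq_sub i m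
      have hval : ((m - i : Fin N) : ℕ) % N = (((0 - i : Fin N) : ℕ) + (m : ℕ)) % N := by
        rw [← hsub, Fin.val_add, Nat.mod_mod_of_dvd _ dvd_rfl]
      have := Nat.ModEq.mul_right (j : ℕ) (hval : Nat.ModEq N _ _)
      rw [← add_mul]; exact this
    rw [pow_of_modeq h1 hmod, pow_add]
    ring
  have hVdet : V.det ≠ 0 := by
    rw [hV, Matrix.det_vandermonde]
    refine Finset.prod_ne_zero_iff.mpr fun i _ => Finset.prod_ne_zero_iff.mpr fun j hj => ?_
    have hij : i ≠ j := ne_of_lt (Finset.mem_Ioi.mp hj)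
    intro hzero
    apply hij
    have heq : u j = u i := sub_eq_zero.mp hzero
    have := hω.pow_inj (Fin.is_lt _) (Fin.is_lt _) heq
    have h0 : (0 - j : Fin N) = 0 - i := Fin.val_injective this
    exact (sub_right_inj.mp h0).symm
  have hdet := congrArg Matrix.det key
  rw [Matrix.det_mul, Matrix.det_mul, Matrix.det_diagonal] at hdet
  have := mul_right_cancel₀ hVdet (by rw [hdet]; ring : (Matrix.circulant v).det * V.det
    = (∏ j : Fin N, ∑ m : Fin N, v m * ω ^ ((m : ℕ) * (j : ℕ))) * V.det)
  exact this

/-- product of (a + b ζ) over all N-th roots of unity, N odd -/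
private lemma prod_add_pow {N : ℕ} (hN : 0 < N) (hodd : Odd N) {ω : ℂ}
    (hω : IsPrimitiveRoot ω N) (a b : ℂ) :
    ∏ j : Fin N, (a + b * ω ^ (j : ℕ)) = a ^ N + b ^ N := by
  have h := X_pow_sub_C_eq_prod hω hN (rfl : (-b) ^ N = (-b) ^ N)
  have h2 := congrArg (Polynomial.eval a) h
  simp only [eval_sub, eval_pow, eval_X, eval_C, eval_prod, eval_mul] at h2
  rw [hodd.neg_pow] at h2
  rw [Fin.prod_univ_eq_prod_range (fun i => a + b * ω ^ i) N]
  calc ∏ i ∈ Finset.range N, (a + b * ω ^ i)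
      = ∏ i ∈ Finset.range N, (a - ω ^ i * (-b)) := by
        refine Finset.prod_congr rfl fun i _ => by ring
    _ = a ^ N + b ^ N := by rw [← h2]; ring

/-- the key per-root identity -/
private lemma symbol_eq (d : ℕ) (z η : ℂ) (hη : η ^ (2 * d + 1) = 1) :
    (1 + η ^ (d + 1)) *
      (∑ m : Fin (2 * d + 1),
        (if m = 0 then z else if (m : ℕ) ≤ d then 1 else -1) * η ^ (m : ℕ))
    = (z + 1) + η ^ (d + 1) * (z - 1) := by
  set g := ∑ i ∈ Finset.range d, η ^ i with hg
  have h2 : (η - 1) * g = η ^ d - 1 := by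
    rw [hg, mul_comm]; exact geom_sum_mul η d
  have hsum : (∑ m : Fin (2 * d + 1),
      (if m = 0 then z else if (m : ℕ) ≤ d then 1 else -1) * η ^ (m : ℕ))
      = z + η * g - η ^ (d + 1) * g := by
    have hc : ∀ m : Fin (2 * d + 1),
        (if m = 0 then z else if (m : ℕ) ≤ d then 1 else -1) * η ^ (m : ℕ)
        = (fun k : ℕ => (if k = 0 then z else if k ≤ d then 1 else -1) * η ^ k) (m : ℕ) := by
      intro m
      simp only [← Fin.val_eq_zero_iff]
    rw [Finset.sum_congr rfl fun m _ => hc m,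
      Fin.sum_univ_eq_sum_range (fun k => (if k = 0 then z else if k ≤ d then 1 else -1) * η ^ k)
        (2 * d + 1),
      show 2 * d + 1 = (1 + d) + d by ring, Finset.sum_range_add, Finset.sum_range_add]
    rw [Finset.sum_range_one]
    have e1 : ∀ x ∈ Finset.range d,
        (if 1 + x = 0 then z else if 1 + x ≤ d then (1 : ℂ) else -1) * η ^ (1 + x)
        = η * η ^ x := by
      intro x hx
      rw [Finset.mem_range] at hx
      rw [if_neg (by omega), if_pos (by omega), pow_add, pow_one]
      ring
    have e2 : ∀ x ∈ Finset.range d,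
        (if 1 + d + x = 0 then z else if 1 + d + x ≤ d then (1 : ℂ) else -1) * η ^ (1 + d + x)
        = -(η ^ (d + 1) * η ^ x) := by
      intro x hx
      rw [if_neg (by omega), if_neg (by omega), show 1 + d + x = (d + 1) + x by ring, pow_add]
      ring
    rw [Finset.sum_congr rfl e1, Finset.sum_congr rfl e2, if_pos rfl,
      Finset.sum_neg_distrib, ← Finset.mul_sum, ← Finset.mul_sum, hg]
    ring
  rw [hsum]
  linear_combination (1 - η * g) * hη + η ^ (d + 1) * h2

/-- value of a Fin subtraction -/
private lemma fin_sub_val {N : ℕ} [NeZero N] (x y : Fin N) :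
    ((x - y : Fin N) : ℕ) = if (y : ℕ) ≤ (x : ℕ) then (x : ℕ) - (y : ℕ)
      else N + (x : ℕ) - (y : ℕ) := by
  have hx := x.is_lt
  have hy := y.is_lt
  rw [Fin.sub_def]
  split_ifs with h
  · show (N - (y : ℕ) + (x : ℕ)) % N = (x : ℕ) - (y : ℕ)
    rw [show N - (y : ℕ) + (x : ℕ) = ((x : ℕ) - (y : ℕ)) + 1 * N by omega,
      Nat.add_mul_mod_self_right, Nat.mod_eq_of_lt (by omega)]
  · show (N - (y : ℕ) + (x : ℕ)) % N = N + (x : ℕ) - (y : ℕ)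
    rw [Nat.mod_eq_of_lt (by omega)]
    omega

/-- the main complex determinant identity -/
private lemma main_complex (d : ℕ) (z : ℂ) :
    2 * ((z • (1 : Matrix (Fin (2 * d + 1)) (Fin (2 * d + 1)) ℂ) -
      Matrix.of fun i j : Fin (2 * d + 1) =>
        if i = j then (0 : ℂ) else
          if ((j - i : Fin (2 * d + 1)) : ℕ) ≤ d then 1 else -1).det)
    = (z + 1) ^ (2 * d + 1) + (z - 1) ^ (2 * d + 1) := by
  set N := 2 * d + 1 with hNdef
  have hN0 : N ≠ 0 := by omega
  haveI : NeZero N := ⟨hN0⟩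
  set vN : Fin N → ℂ := fun m => if m = 0 then z else if (m : ℕ) ≤ d then 1 else -1 with hvN
  have hm : (z • (1 : Matrix (Fin N) (Fin N) ℂ) -
      Matrix.of fun i j : Fin N =>
        if i = j then (0 : ℂ) else
          if ((j - i : Fin N) : ℕ) ≤ d then 1 else -1) = Matrix.circulant vN := by
    ext i j
    rw [Matrix.circulant_apply, Matrix.sub_apply, Matrix.smul_apply, Matrix.of_apply]
    by_cases h : i = j
    · subst h
      simp [hvN, Matrix.one_apply]
    · have hij : i - j ≠ 0 := sub_ne_zero.mpr h
      rw [Matrix.one_apply_ne h, if_neg h, hvN]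
      simp only [if_neg hij, smul_zero, zero_sub]
      have h1 := fin_sub_val i j
      have h2 := fin_sub_val j i
      have hvne : (i : ℕ) ≠ (j : ℕ) := fun hc => h (Fin.val_injective hc)
      have hx := i.is_lt
      have hy := j.is_lt
      by_cases hij2 : ((i - j : Fin N) : ℕ) ≤ d
      · rw [if_pos hij2, if_neg (by rw [h2]; rw [h1] at hij2; split_ifs at hij2 ⊢ <;> omega)]
        norm_num
      · rw [if_neg hij2, if_pos (by rw [h2]; rw [h1] at hij2; split_ifs at hij2 ⊢ <;> omega)]
  rw [hm]
  have hNpos : 0 < N := Nat.pos_of_ne_zero hN0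
  obtain ⟨ω, hprim⟩ : ∃ ω : ℂ, IsPrimitiveRoot ω N :=
    ⟨Complex.exp (2 * Real.pi * Complex.I / N), Complex.isPrimitiveRoot_exp N hN0⟩
  rw [det_circulant_eq hprim vN]
  have hω1 : ω ^ N = 1 := hprim.pow_eq_one
  have hcop : Nat.Coprime (d + 1) N := by
    have h1 := Nat.gcd_dvd_left (d + 1) N
    have h2 := Nat.gcd_dvd_right (d + 1) N
    have h3 := Nat.dvd_sub (h1.mul_left 2) h2
    rw [show 2 * (d + 1) - N = 1 by omega] at h3
    exact Nat.dvd_one.mp h3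
  have hprim' : IsPrimitiveRoot (ω ^ (d + 1)) N := hprim.pow_of_coprime (d + 1) hcop
  have hodd : Odd N := ⟨d, by omega⟩
  have hp2 : ∏ j : Fin N, ((1 : ℂ) + 1 * (ω ^ (d + 1)) ^ (j : ℕ)) = 2 := by
    rw [prod_add_pow hNpos hodd hprim' 1 1, one_pow]
    norm_num
  have hp3 : ∏ j : Fin N, ((z + 1) + (z - 1) * (ω ^ (d + 1)) ^ (j : ℕ))
      = (z + 1) ^ N + (z - 1) ^ N := prod_add_pow hNpos hodd hprim' (z + 1) (z - 1)
  calc 2 * ∏ j : Fin N, ∑ m : Fin N, vN m * ω ^ ((m : ℕ) * (j : ℕ))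
      = (∏ j : Fin N, ((1 : ℂ) + 1 * (ω ^ (d + 1)) ^ (j : ℕ))) *
        ∏ j : Fin N, ∑ m : Fin N, vN m * ω ^ ((m : ℕ) * (j : ℕ)) := by rw [hp2]
    _ = ∏ j : Fin N, (((1 : ℂ) + 1 * (ω ^ (d + 1)) ^ (j : ℕ)) *
        ∑ m : Fin N, vN m * ω ^ ((m : ℕ) * (j : ℕ))) := (Finset.prod_mul_distrib).symm
    _ = ∏ j : Fin N, ((z + 1) + (z - 1) * (ω ^ (d + 1)) ^ (j : ℕ)) := by
        refine Finset.prod_congr rfl fun j _ => ?_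
        have hη : (ω ^ (j : ℕ)) ^ (2 * d + 1) = 1 := by
          rw [← pow_mul, mul_comm, pow_mul, ← hNdef, hω1, one_pow]
        have hkey := symbol_eq d z (ω ^ (j : ℕ)) hη
        have hsum : (∑ m : Fin N, vN m * ω ^ ((m : ℕ) * (j : ℕ)))
            = ∑ m : Fin (2 * d + 1),
              (if m = 0 then z else if (m : ℕ) ≤ d then 1 else -1) * (ω ^ (j : ℕ)) ^ (m : ℕ) := by
          refine Finset.sum_congr rfl fun m _ => ?_
          rw [hvN, ← pow_mul, mul_comm (j : ℕ) (m : ℕ)]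
        have hζ : (ω ^ (j : ℕ)) ^ (d + 1) = (ω ^ (d + 1)) ^ (j : ℕ) := by
          rw [← pow_mul, ← pow_mul, mul_comm]
        rw [hsum]
        rw [hζ] at hkey
        rw [one_mul]
        rw [hkey]
        ring
    _ = (z + 1) ^ N + (z - 1) ^ N := hp3

end Aux

theorem stmt14 {d : ℕ} :
    C (2 : ℤ) * (Matrix.of fun i j : Fin (2 * d + 1) =>
        if i = j then (0 : ℤ) else
          if ((j - i : Fin (2 * d + 1)) : ℕ) ≤ d then 1 else -1).charpoly
      = (X + 1) ^ (2 * d + 1) + (X - 1) ^ (2 * d + 1) := by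
  set M : Matrix (Fin (2 * d + 1)) (Fin (2 * d + 1)) ℤ :=
    Matrix.of fun i j : Fin (2 * d + 1) =>
      if i = j then (0 : ℤ) else
        if ((j - i : Fin (2 * d + 1)) : ℕ) ≤ d then 1 else -1 with hM
  apply Polynomial.funext
  intro x
  rw [eval_mul, eval_C]
  simp only [eval_add, eval_pow, eval_sub, eval_X, eval_one]
  have hev : Polynomial.eval x M.charpoly = (x • (1 : Matrix _ _ ℤ) - M).det := by
    rw [Matrix.charpoly]
    have hmap := RingHom.map_det (Polynomial.evalRingHom x) (Matrix.charmatrix M)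
    rw [show Polynomial.eval x (Matrix.charmatrix M).det
        = (Polynomial.evalRingHom x) (Matrix.charmatrix M).det from rfl, hmap]
    congr 1
    ext i j
    rw [RingHom.mapMatrix_apply, Matrix.map_apply, Matrix.sub_apply, Matrix.smul_apply,
      smul_eq_mul]
    by_cases h : i = j
    · subst h
      rw [Matrix.charmatrix_apply_eq, Matrix.one_apply_eq, mul_one]
      simp
    · rw [Matrix.charmatrix_apply_ne _ _ _ h, Matrix.one_apply_ne h, mul_zero]
      simp
  rw [hev]
  have hmain := main_complex d (x : ℂ)
  apply @Int.cast_injective ℂ _ _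
  push_cast
  have hcast : ((x • (1 : Matrix (Fin (2 * d + 1)) (Fin (2 * d + 1)) ℤ) - M).det : ℂ)
      = ((x : ℂ) • (1 : Matrix (Fin (2 * d + 1)) (Fin (2 * d + 1)) ℂ) -
        Matrix.of fun i j : Fin (2 * d + 1) =>
          if i = j then (0 : ℂ) else
            if ((j - i : Fin (2 * d + 1)) : ℕ) ≤ d then 1 else -1).det := by
    rw [show ((x • (1 : Matrix (Fin (2 * d + 1)) (Fin (2 * d + 1)) ℤ) - M).det : ℂ)
        = (Int.castRingHom ℂ) (x • (1 : Matrix _ _ ℤ) - M).det from rfl,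
      RingHom.map_det]
    congr 1
    ext i j
    rw [RingHom.mapMatrix_apply, Matrix.map_apply, Matrix.sub_apply, Matrix.smul_apply,
      smul_eq_mul, Matrix.sub_apply, Matrix.smul_apply, smul_eq_mul]
    by_cases h : i = j
    · subst h
      rw [Matrix.one_apply_eq, mul_one, Matrix.one_apply_eq, mul_one]
      simp [hM]
    · rw [Matrix.one_apply_ne h, mul_zero, Matrix.one_apply_ne h, mul_zero, hM]
      simp only [Matrix.of_apply, if_neg h]
      split_ifs <;> simp
  rw [show ((x • 1 - M).map fun x => (x : ℂ)).det = ((x • 1 - M).det : ℂ) from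
    (RingHom.map_det (Int.castRingHom ℂ) _).symm, hcast]
  linear_combination hmain
end

section
/- Let A be a real n×n matrix whose symmetric part (A + A^T)/2 is positive definite. Then det((A + A^T)/2) ≤ det(A), with equality if and only if A is symmetric (A = A^T). -/
open Matrix BigOperators Finset Polynomial


variable {n : ℕ}

-- skew quadratic form vanishes
lemma skew_quad (M : Matrix (Fin n) (Fin n) ℝ) (hM : Mᵀ = -M) (v : Fin n → ℝ) :
    v ⬝ᵥ M *ᵥ v = 0 := by
  have h1 : v ⬝ᵥ M *ᵥ v = (Mᵀ *ᵥ v) ⬝ᵥ v := by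
    rw [Matrix.dotProduct_mulVec, Matrix.mulVec_transpose]
  rw [hM] at h1
  simp only [Matrix.neg_mulVec, neg_dotProduct] at h1
  linarith [dotProduct_comm v (M *ᵥ v)]

lemma det_one_add_skew_ne (M : Matrix (Fin n) (Fin n) ℝ) (hM : Mᵀ = -M) :
    ((1 : Matrix (Fin n) (Fin n) ℝ) + M).det ≠ 0 := by
  intro h
  obtain ⟨v, hv, hmv⟩ := (Matrix.exists_mulVec_eq_zero_iff).2 h
  have := congrArg (fun w => v ⬝ᵥ w) hmv
  simp only [Matrix.add_mulVec, Matrix.one_mulVec, dotProduct_add,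
    skew_quad M hM v, add_zero, dotProduct_zero] at this
  exact hv (dotProduct_self_eq_zero.mp this)

lemma det_one_add_skew_pos (M : Matrix (Fin n) (Fin n) ℝ) (hM : Mᵀ = -M) :
    0 < ((1 : Matrix (Fin n) (Fin n) ℝ) + M).det := by
  set f : ℝ → ℝ := fun t => ((1 : Matrix (Fin n) (Fin n) ℝ) + t • M).det with hf
  have hcont : Continuous f := by
    apply Continuous.matrix_det
    exact continuous_const.add (continuous_id.smul continuous_const)
  have hne : ∀ t : ℝ, f t ≠ 0 := by
    intro t
    apply det_one_add_skew_ne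
    rw [Matrix.transpose_smul, hM, smul_neg]
  have hf0 : f 0 = 1 := by simp [hf]
  by_contra hle
  push_neg at hle
  have h1 : f 1 < 0 := lt_of_le_of_ne (by simpa [hf] using hle) (hne 1)
  have : (0 : ℝ) ∈ Set.Icc (f 1) (f 0) := ⟨le_of_lt h1, by rw [hf0]; norm_num⟩
  obtain ⟨t, _, ht⟩ := intermediate_value_Icc' (by norm_num : (0:ℝ) ≤ 1) hcont.continuousOn this
  exact hne t ht

lemma det_one_add_psd (P : Matrix (Fin n) (Fin n) ℝ) (hP : P.PosSemidef) :
    1 ≤ ((1 : Matrix (Fin n) (Fin n) ℝ) + P).det ∧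
      (((1 : Matrix (Fin n) (Fin n) ℝ) + P).det = 1 → P = 0) := by
  have hH := hP.1
  set U : Matrix (Fin n) (Fin n) ℝ := (hH.eigenvectorUnitary : Matrix (Fin n) (Fin n) ℝ) with hU
  have hspec := hH.spectral_theorem
  rw [Unitary.conjStarAlgAut_apply] at hspec
  have hUU : U * star U = 1 := Matrix.mem_unitaryGroup_iff.mp hH.eigenvectorUnitary.2
  have hUU' : star U * U = 1 := Matrix.mem_unitaryGroup_iff'.mp hH.eigenvectorUnitary.2
  have hkey : ((1 : Matrix (Fin n) (Fin n) ℝ) + P).det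
      = ∏ i, (1 + hH.eigenvalues i) := by
    have h1 : (1 : Matrix (Fin n) (Fin n) ℝ) + P
        = U * (1 + Matrix.diagonal (RCLike.ofReal ∘ hH.eigenvalues)) * star U := by
      rw [mul_add, add_mul, mul_one, hUU]
      rw [← hspec]
    rw [h1, Matrix.det_mul, Matrix.det_mul, mul_comm, ← mul_assoc, ← Matrix.det_mul, hUU',
      Matrix.det_one, one_mul]
    have : (1 : Matrix (Fin n) (Fin n) ℝ) + Matrix.diagonal (RCLike.ofReal ∘ hH.eigenvalues)
        = Matrix.diagonal (fun i => 1 + hH.eigenvalues i) := by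
      rw [← Matrix.diagonal_one, Matrix.diagonal_add]
      rfl
    rw [this, Matrix.det_diagonal]
  have hev : ∀ i, 0 ≤ hH.eigenvalues i := hP.eigenvalues_nonneg
  have hprodge : ∀ s : Finset (Fin n), (1:ℝ) ≤ ∏ i ∈ s, (1 + hH.eigenvalues i) := by
    intro s
    calc (1:ℝ) = ∏ _i ∈ s, (1:ℝ) := by simp
    _ ≤ ∏ i ∈ s, (1 + hH.eigenvalues i) :=
      Finset.prod_le_prod (fun i _ => by norm_num) (fun i _ => by linarith [hev i])
  constructor
  · rw [hkey]; exact hprodge Finset.univ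
  · intro hdet
    rw [hkey] at hdet
    have hz : hH.eigenvalues = 0 := by
      funext j
      have hsplit := Finset.mul_prod_erase Finset.univ
        (fun i => 1 + hH.eigenvalues i) (Finset.mem_univ j)
      have h1 : (1 + hH.eigenvalues j) * 1 ≤
          (1 + hH.eigenvalues j) * ∏ i ∈ Finset.univ.erase j, (1 + hH.eigenvalues i) :=
        mul_le_mul_of_nonneg_left (hprodge _) (by linarith [hev j])
      rw [mul_one] at h1
      rw [hsplit, hdet] at h1
      have := hev j
      simp only [Pi.zero_apply]
      linarith
    rw [hspec, hz]
    have hd0 : Matrix.diagonal (RCLike.ofReal ∘ (0 : Fin n → ℝ)) = (0 : Matrix (Fin n) (Fin n) ℝ) := by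
      ext i j
      simp [Matrix.diagonal]
    rw [hd0, Matrix.mul_zero, Matrix.zero_mul]

lemma det_one_add_skew (M : Matrix (Fin n) (Fin n) ℝ) (hM : Mᵀ = -M) :
    1 ≤ ((1 : Matrix (Fin n) (Fin n) ℝ) + M).det ∧
      (((1 : Matrix (Fin n) (Fin n) ℝ) + M).det = 1 ↔ M = 0) := by
  have h1 : ((1 : Matrix (Fin n) (Fin n) ℝ) + M) * ((1 : Matrix (Fin n) (Fin n) ℝ) + M)ᵀ
      = 1 + M * Mᵀ := by
    rw [Matrix.transpose_add, Matrix.transpose_one]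
    rw [hM]
    noncomm_ring
  have hsq : ((1 : Matrix (Fin n) (Fin n) ℝ) + M).det ^ 2
      = ((1 : Matrix (Fin n) (Fin n) ℝ) + M * Mᵀ).det := by
    rw [← h1, Matrix.det_mul, Matrix.det_transpose, sq]
  have hpsd : (M * Mᵀ).PosSemidef := by
    have := Matrix.posSemidef_self_mul_conjTranspose M
    rwa [Matrix.conjTranspose_eq_transpose_of_trivial] at this
  obtain ⟨hge, heq⟩ := det_one_add_psd (M * Mᵀ) hpsd
  have hpos := det_one_add_skew_pos M hM
  have hge1 : 1 ≤ ((1 : Matrix (Fin n) (Fin n) ℝ) + M).det := by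
    nlinarith [hsq]
  refine ⟨hge1, ?_, ?_⟩
  · intro hd1
    have hMMt : M * Mᵀ = 0 := by
      apply heq
      rw [← hsq, hd1]
      norm_num
    have : (Mᵀ)ᴴ * Mᵀ = 0 := by
      rwa [Matrix.conjTranspose_eq_transpose_of_trivial, Matrix.transpose_transpose]
    have := Matrix.conjTranspose_mul_self_eq_zero.mp this
    calc M = (Mᵀ)ᵀ := (Matrix.transpose_transpose M).symm
    _ = 0 := by rw [this]; simp
  · intro h0
    rw [h0, add_zero, Matrix.det_one]

theorem stmt16 {n : ℕ} (A : Matrix (Fin n) (Fin n) ℝ)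
    (hpd : ((2⁻¹ : ℝ) • (A + Aᵀ)).PosDef) :
    ((2⁻¹ : ℝ) • (A + Aᵀ)).det ≤ A.det ∧
      (((2⁻¹ : ℝ) • (A + Aᵀ)).det = A.det ↔ A = Aᵀ) := by
  set S : Matrix (Fin n) (Fin n) ℝ := (2⁻¹ : ℝ) • (A + Aᵀ) with hSdef
  set K : Matrix (Fin n) (Fin n) ℝ := (2⁻¹ : ℝ) • (A - Aᵀ) with hKdef
  have hKskew : Kᵀ = -K := by
    rw [hKdef, Matrix.transpose_smul, Matrix.transpose_sub, Matrix.transpose_transpose]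
    rw [← smul_neg, neg_sub]
  have hSK : S + K = A := by
    rw [hSdef, hKdef, ← smul_add]
    have : A + Aᵀ + (A - Aᵀ) = (2 : ℝ) • A := by
      rw [two_smul]; abel
    rw [this, smul_smul]
    norm_num
  -- B := sqrt of S
  set B : Matrix (Fin n) (Fin n) ℝ := (by open scoped MatrixOrder in exact CFC.sqrt S) with hBdef
  have hBB : B * B = S := by
    open scoped MatrixOrder in exact CFC.sqrt_mul_sqrt_self S hpd.posSemidef.nonneg
  have hBsymm : Bᵀ = B := by
    have := (by open scoped MatrixOrder in exact (CFC.sqrt_nonneg S).posSemidef.1 : B.IsHermitian)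
    rwa [Matrix.IsHermitian, Matrix.conjTranspose_eq_transpose_of_trivial] at this
  have hSdet : 0 < S.det := hpd.det_pos
  have hBdet : B.det ≠ 0 := by
    intro h
    rw [← hBB, Matrix.det_mul, h, mul_zero] at hSdet
    exact lt_irrefl _ hSdet
  have hBunit : IsUnit B.det := hBdet.isUnit
  have hBinv : B * B⁻¹ = 1 := Matrix.mul_nonsing_inv B hBunit
  have hBinv' : B⁻¹ * B = 1 := Matrix.nonsing_inv_mul B hBunit
  set M : Matrix (Fin n) (Fin n) ℝ := B⁻¹ * K * B⁻¹ with hMdef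
  have hBinvT : (B⁻¹)ᵀ = B⁻¹ := by rw [Matrix.transpose_nonsing_inv, hBsymm]
  have hMskew : Mᵀ = -M := by
    rw [hMdef, Matrix.transpose_mul, Matrix.transpose_mul, hBinvT, hKskew]
    noncomm_ring
  have hfact : A = B * (1 + M) * B := by
    rw [hMdef]
    rw [Matrix.mul_add, Matrix.mul_one, Matrix.add_mul, hBB]
    rw [show B * (B⁻¹ * K * B⁻¹) * B = (B * B⁻¹) * K * (B⁻¹ * B) by noncomm_ring,
      hBinv, hBinv', Matrix.one_mul, Matrix.mul_one, hSK]
  have hdetA : A.det = S.det * (1 + M).det := by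
    rw [hfact, Matrix.det_mul, Matrix.det_mul, ← hBB, Matrix.det_mul]
    ring
  obtain ⟨hge1, heq1⟩ := det_one_add_skew M hMskew
  have hK0 : M = 0 ↔ A = Aᵀ := by
    constructor
    · intro hM0
      have : K = 0 := by
        have : B * M * B = K := by
          rw [hMdef, show B * (B⁻¹ * K * B⁻¹) * B = (B * B⁻¹) * K * (B⁻¹ * B) by noncomm_ring,
            hBinv, hBinv', Matrix.one_mul, Matrix.mul_one]
        rw [← this, hM0, Matrix.mul_zero, Matrix.zero_mul]
      have h2 : A - Aᵀ = 0 := by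
        have := congrArg (fun X => (2 : ℝ) • X) this
        simpa [hKdef, smul_smul] using this
      rw [← sub_eq_zero]; exact h2
    · intro hAT
      have hK : K = 0 := by rw [hKdef, show A - Aᵀ = 0 from sub_eq_zero.mpr hAT, smul_zero]
      rw [hMdef, hK, Matrix.mul_zero, Matrix.zero_mul]
  constructor
  · rw [hdetA]
    exact le_mul_of_one_le_right (le_of_lt hSdet) hge1
  · rw [hdetA]
    constructor
    · intro h
      have : (1 + M).det = 1 := by
        field_simp at h
        nlinarith [h, hSdet]
      exact hK0.mp (heq1.mp this)
    · intro h
      rw [heq1.mpr (hK0.mpr h), mul_one]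
end

section
/- Let G be a connected undirected multigraph on n vertices with an Eulerian orientation O. Then arb(O) ≥ sp(G)/2^{n-1}, where sp(G) is the number of spanning trees of G, with equality if and only if 2·L(O) = L(G) (i.e., for every pair u,v the edges between them are split evenly in the two directions). -/
open Matrix BigOperators Finset Polynomial

lemma det_one_add_psd_s17 {ι : Type*} [Fintype ι] [DecidableEq ι] {R : Matrix ι ι ℝ}
    (hR : R.PosSemidef) : 1 ≤ (1 + R).det ∧ ((1 + R).det = 1 ↔ R = 0) := by
  have hH := hR.isHermitian
  have hspec := hH.spectral_theorem
  set U : Matrix ι ι ℝ := (hH.eigenvectorUnitary : Matrix ι ι ℝ) with hU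
  have hUU : U * star U = 1 := (Matrix.mem_unitaryGroup_iff).mp hH.eigenvectorUnitary.2
  have hone : (1 : Matrix ι ι ℝ) + R = U * (1 + diagonal (RCLike.ofReal ∘ hH.eigenvalues)) * star U := by
    rw [mul_add, add_mul, mul_one, hUU]; exact congrArg (1 + ·) hspec
  have hev := hR.eigenvalues_nonneg
  have hdet : (1 + R).det = ∏ i, (1 + hH.eigenvalues i) := by
    rw [hone, det_mul_right_comm, hUU, Matrix.one_mul]
    rw [show (1 : Matrix ι ι ℝ) + diagonal (RCLike.ofReal ∘ hH.eigenvalues)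
        = diagonal (fun i => 1 + hH.eigenvalues i) by
      rw [← Matrix.diagonal_one, Matrix.diagonal_add]; rfl]
    exact Matrix.det_diagonal
  have hfac : ∀ i ∈ Finset.univ, (1:ℝ) ≤ 1 + hH.eigenvalues i := fun i _ => by linarith [hev i]
  constructor
  · rw [hdet]
    calc (1:ℝ) = ∏ _i : ι, 1 := by simp
    _ ≤ _ := Finset.prod_le_prod (by intros; norm_num) hfac
  · constructor
    · intro h
      have hev0 : ∀ i, hH.eigenvalues i = 0 := by
        intro j
        by_contra hj
        have hjpos : 0 < hH.eigenvalues j := lt_of_le_of_ne (hev j) (Ne.symm hj)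
        have h1 : (1:ℝ) ≤ ∏ i ∈ Finset.univ.erase j, (1 + hH.eigenvalues i) := by
          calc (1:ℝ) = ∏ _i ∈ Finset.univ.erase j, (1:ℝ) := by simp
          _ ≤ _ := Finset.prod_le_prod (by intros; norm_num)
                (fun i _ => by linarith [hev i])
        have h2 := Finset.mul_prod_erase Finset.univ (fun i => 1 + hH.eigenvalues i)
          (Finset.mem_univ j)
        rw [← hdet, h] at h2
        nlinarith [h2, h1, hjpos]

      rw [hspec]
      have : diagonal (RCLike.ofReal ∘ hH.eigenvalues) = (0 : Matrix ι ι ℝ) := by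
        ext i j; by_cases hij : i = j <;> simp [diagonal, hij, hev0]
      rw [this]; simp
    · intro h; rw [h]; simp [hdet]

lemma det_add_psd {ι : Type*} [Fintype ι] [DecidableEq ι] {S P : Matrix ι ι ℝ}
    (hS : S.PosDef) (hP : P.PosSemidef) :
    S.det ≤ (S + P).det ∧ ((S + P).det = S.det ↔ P = 0) := by
  obtain ⟨Q, hQpsd, hQsq⟩ : ∃ Q : Matrix ι ι ℝ, Q.PosSemidef ∧ Q * Q = S :=
    by open scoped MatrixOrder in exact ⟨CFC.sqrt S, (CFC.sqrt_nonneg S).posSemidef,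
      CFC.sqrt_mul_sqrt_self S hS.posSemidef.nonneg⟩
  have hdetQ : Q.det * Q.det = S.det := by rw [← det_mul, hQsq]
  have hQdet : IsUnit Q.det := by
    have := hS.det_pos
    refine isUnit_iff_ne_zero.mpr fun h0 => ?_
    rw [h0, mul_zero] at hdetQ; linarith [hdetQ]
  have hQQi : Q * Q⁻¹ = 1 := mul_nonsing_inv Q hQdet
  have hQiQ : Q⁻¹ * Q = 1 := nonsing_inv_mul Q hQdet
  have hQit : (Q⁻¹)ᴴ = Q⁻¹ := by
    rw [show (Q⁻¹)ᴴ = (Qᴴ)⁻¹ from conjTranspose_nonsing_inv Q, hQpsd.isHermitian.eq]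
  have hRpsd : ((Q⁻¹)ᴴ * P * Q⁻¹).PosSemidef := hP.conjTranspose_mul_mul_same Q⁻¹
  rw [hQit] at hRpsd
  have hSP : S + P = Q * (1 + Q⁻¹ * P * Q⁻¹) * Q := by
    rw [mul_add, add_mul, mul_one, hQsq]
    congr 1
    rw [← Matrix.mul_assoc, ← Matrix.mul_assoc, hQQi, Matrix.one_mul, Matrix.mul_assoc, hQiQ,
      Matrix.mul_one]
  have hdet : (S + P).det = S.det * (1 + Q⁻¹ * P * Q⁻¹).det := by
    rw [hSP, det_mul, det_mul, ← hdetQ]; ring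
  obtain ⟨h1, h2⟩ := det_one_add_psd_s17 hRpsd
  constructor
  · rw [hdet]
    nlinarith [hS.det_pos]
  · rw [hdet]
    constructor
    · intro h
      have : (1 + Q⁻¹ * P * Q⁻¹).det = 1 :=
        mul_left_cancel₀ (ne_of_gt hS.det_pos) (by rw [h, mul_one])
      have hR0 : Q⁻¹ * P * Q⁻¹ = 0 := h2.mp this
      have : Q * (Q⁻¹ * P * Q⁻¹) * Q = 0 := by rw [hR0]; simp
      rwa [← Matrix.mul_assoc, ← Matrix.mul_assoc, hQQi, Matrix.one_mul, Matrix.mul_assoc, hQiQ,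
        Matrix.mul_one] at this
    · intro h; rw [h]; simp

lemma skew_det_sq {ι : Type*} [Fintype ι] [DecidableEq ι] {S K : Matrix ι ι ℝ}
    (hS : S.PosDef) (hK : Kᵀ = -K) :
    (S + K).det * (S + K).det = S.det * (S + K * S⁻¹ * Kᵀ).det := by
  have hSd : IsUnit S.det := isUnit_iff_ne_zero.mpr (ne_of_gt hS.det_pos)
  have hSi : S * S⁻¹ = 1 := mul_nonsing_inv S hSd
  have hSi' : S⁻¹ * S = 1 := nonsing_inv_mul S hSd
  have hSt : Sᵀ = S := hS.isHermitian.eq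
  have key : (S + K) * S⁻¹ * (S + K)ᵀ = S + K * S⁻¹ * Kᵀ := by
    rw [transpose_add, hSt, hK]
    have : (S + K) * S⁻¹ = 1 + K * S⁻¹ := by rw [add_mul, hSi]
    rw [this, add_mul, Matrix.one_mul, mul_add, Matrix.mul_assoc K S⁻¹ S, hSi',
      Matrix.mul_one]
    abel
  have hdet := congrArg Matrix.det key
  rw [det_mul, det_mul, det_transpose, Matrix.det_nonsing_inv] at hdet
  have hdi : S.det * (Ring.inverse S.det) = 1 := Ring.mul_inverse_cancel _ hSd
  rw [← hdet, Ring.inverse_eq_inv']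
  field_simp [ne_of_gt hS.det_pos]

lemma det_add_skew {ι : Type*} [Fintype ι] [DecidableEq ι] {S K : Matrix ι ι ℝ}
    (hS : S.PosDef) (hK : Kᵀ = -K) :
    S.det ≤ (S + K).det ∧ ((S + K).det = S.det ↔ K = 0) := by
  have hSinv : (S⁻¹).PosDef := hS.inv
  have hpsd : ∀ t : ℝ, ((t • K) * S⁻¹ * (t • K)ᵀ).PosSemidef := fun t => by
    have := hSinv.posSemidef.mul_mul_conjTranspose_same (t • K)
    simpa using this
  have hskew : ∀ t : ℝ, (t • K)ᵀ = -(t • K) := fun t => by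
    rw [transpose_smul, hK]; module
  have hsq : ∀ t : ℝ, (S + t • K).det * (S + t • K).det
      = S.det * (S + (t • K) * S⁻¹ * (t • K)ᵀ).det := fun t => skew_det_sq hS (hskew t)
  have hge : ∀ t : ℝ, S.det ≤ (S + (t • K) * S⁻¹ * (t • K)ᵀ).det := fun t =>
    (det_add_psd hS (hpsd t)).1
  have hne : ∀ t : ℝ, (S + t • K).det ≠ 0 := fun t h0 => by
    have h1 := hsq t
    rw [h0, mul_zero] at h1
    nlinarith [hge t, hS.det_pos]
  have hcont : Continuous fun t : ℝ => (S + t • K).det :=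
    (continuous_const.add (continuous_id.smul continuous_const)).matrix_det
  have hpos : 0 < (S + K).det := by
    rcases lt_or_gt_of_ne (hne 1) with hneg | hp
    · exfalso
      simp only [one_smul] at hneg
      have h0 : (0:ℝ) ∈ Set.Icc ((fun t : ℝ => (S + t • K).det) 1)
          ((fun t : ℝ => (S + t • K).det) 0) := by
        constructor
        · simp only [one_smul]; linarith
        · simp only [zero_smul, add_zero]; linarith [hS.det_pos]
      have := intermediate_value_Icc' (by norm_num : (0:ℝ) ≤ 1) hcont.continuousOn h0
      obtain ⟨t, _, ht⟩ := this
      exact hne t ht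
    · simpa using hp
  have hsq1 := hsq 1
  simp only [one_smul] at hsq1
  have hge1 := hge 1
  simp only [one_smul] at hge1
  constructor
  · nlinarith [hS.det_pos, hsq1, hge1, hpos]
  · constructor
    · intro h
      rw [h] at hsq1
      have hPdet : (S + K * S⁻¹ * Kᵀ).det = S.det :=
        mul_left_cancel₀ (ne_of_gt hS.det_pos) (by rw [← hsq1])
      have hP0 : K * S⁻¹ * Kᵀ = 0 := by
        have := (det_add_psd hS ?_).2.mp hPdet
        · exact this
        · have := hpsd 1; simpa using this
      -- deduce K = 0
      have hKt : Kᵀ = 0 := by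
        have hvec : ∀ x : ι → ℝ, Kᵀ *ᵥ x = 0 := by
          intro x
          by_contra hx
          have hq := hSinv.dotProduct_mulVec_pos hx
          have : star x ⬝ᵥ ((K * S⁻¹ * Kᵀ) *ᵥ x)
              = star (Kᵀ *ᵥ x) ⬝ᵥ (S⁻¹ *ᵥ (Kᵀ *ᵥ x)) := by
            rw [← mulVec_mulVec, ← mulVec_mulVec]
            simp only [star_trivial]
            rw [dotProduct_mulVec x K, ← mulVec_transpose]
          rw [hP0] at this
          simp only [zero_mulVec, dotProduct_zero] at this
          rw [← this] at hq
          exact lt_irrefl _ hq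
        ext i j
        have := congrFun (hvec (Pi.single j 1)) i
        simpa [mulVec_single] using this
      have := congrArg Matrix.transpose hKt
      simpa using this
    · intro h; rw [h]; simp

 
-- sum splitting helper 
lemma sum_split {n : ℕ} (v : Fin n) (g : Fin n → ℝ) : 
    ∑ i, g i = g v + ∑ i : {j : Fin n // j ≠ v}, g ↑i := by 
  rw [← Finset.add_sum_erase _ g (Finset.mem_univ v)] 
  congr 1 
  exact (Finset.sum_subtype (p := fun j => j ≠ v) (Finset.univ.erase v) (fun x => by simp) g) 
 
lemma lap_reduced_posdef {n : ℕ} (O : Fin n → Fin n → ℕ) (hloop : ∀ i, O i i = 0) 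
    (hconn : (SimpleGraph.fromRel (fun i j : Fin n => 0 < O i j)).Connected) 
    (v : Fin n) : 
    (((lap (fun i j => O i j + O j i)).submatrix 
      (fun i : {j : Fin n // j ≠ v} => (i : Fin n)) 
      (fun j : {j : Fin n // j ≠ v} => (j : Fin n))).map 
        (Int.cast : ℤ → ℝ)).PosDef := by 
  set w : Fin n → Fin n → ℝ := fun i j => ((O i j + O j i : ℕ) : ℝ) with hw 
  set L : Matrix (Fin n) (Fin n) ℝ := (lap (fun i j => O i j + O j i)).map Int.cast with hLdef 
  have hw_nonneg : ∀ i j, 0 ≤ w i j := fun i j => Nat.cast_nonneg _ 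
  have hw_symm : ∀ i j, w i j = w j i := fun i j => by simp [hw, add_comm] 
  have hw_loop : ∀ i, w i i = 0 := fun i => by simp [hw, hloop] 
  have hL : ∀ i j, L i j = (if i = j then (∑ k, w i k) else 0) - w i j := by 
    intro i j 
    by_cases h : i = j 
    · subst h 
      simp [hLdef, lap, outdeg, hw_loop, hw, hloop] 
    · simp only [hLdef, lap, Matrix.map_apply, Matrix.of_apply, if_neg h, hw] 
      push_cast 
      ring 
  -- quadratic form identity 
  have quad : ∀ y : Fin n → ℝ, ∑ i, ∑ j, y i * L i j * y j 
      = (1/2) * ∑ i, ∑ j, w i j * (y i - y j)^2 := by 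
    intro y 
    have lhs_eq : ∑ i, ∑ j, y i * L i j * y j 
        = (∑ i, (∑ k, w i k) * y i ^ 2) - ∑ i, ∑ j, w i j * y i * y j := by 
      have key : ∀ i j, y i * L i j * y j 
          = (if j = i then (∑ k, w i k) * y i ^ 2 else 0) - w i j * y i * y j := by 
        intro i j 
        by_cases h : i = j 
        · subst h; rw [hL, if_pos rfl, if_pos rfl]; ring 
        · rw [hL, if_neg h, if_neg (Ne.symm h)]; ring 
      simp only [key, Finset.sum_sub_distrib, Finset.sum_ite_eq, Finset.sum_ite_eq', Finset.mem_univ, if_true] 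
    have swap : ∑ i, ∑ j, w i j * y j ^ 2 = ∑ i, ∑ j, w i j * y i ^ 2 := by 
      rw [Finset.sum_comm] 
      refine Finset.sum_congr rfl fun i _ => Finset.sum_congr rfl fun j _ => by 
        rw [hw_symm] 
    have expand : ∀ i j, w i j * (y i - y j)^2 
        = w i j * y i ^ 2 + w i j * y j ^ 2 - 2 * (w i j * y i * y j) := fun i j => by ring 
    simp only [expand, Finset.sum_sub_distrib, Finset.sum_add_distrib] at * 
    rw [swap] at * 
    have : ∀ i, (∑ k, w i k) * y i ^ 2 = ∑ k, w i k * y i ^ 2 := fun i => Finset.sum_mul _ _ _ 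
    simp only [this] at lhs_eq 
    rw [lhs_eq] 
    have h2 : ∑ i, ∑ j, (2:ℝ) * (w i j * y i * y j) = 2 * ∑ i, ∑ j, w i j * y i * y j := by 
      simp [Finset.mul_sum] 
    rw [h2] 
    ring 
  have hlapsymm : ∀ a b : Fin n, (lap (fun i j => O i j + O j i)) a b 
      = (lap (fun i j => O i j + O j i)) b a := by 
    intro a b 
    by_cases h : a = b 
    · rw [h] 
    · simp [lap, h, Ne.symm h, add_comm] 
  refine posDef_iff_dotProduct_mulVec.mpr ⟨?_, ?_⟩ 
  · show _ = _ 
    ext i j 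
    simp only [conjTranspose_apply, Matrix.map_apply, Matrix.submatrix_apply, star_trivial] 
    rw [hlapsymm] 
  · intro x hx 
    set y : Fin n → ℝ := fun i => if h : i = v then 0 else x ⟨i, h⟩ with hy 
    have hyv : y v = 0 := by simp [hy] 
    have hyx : ∀ i : {j : Fin n // j ≠ v}, y ↑i = x i := by 
      rintro ⟨i, hi⟩ 
      simp [hy, hi] 
    have hQ : star x ⬝ᵥ ((((lap (fun i j => O i j + O j i)).submatrix 
        (fun i : {j : Fin n // j ≠ v} => (i : Fin n)) 
        (fun j : {j : Fin n // j ≠ v} => (j : Fin n))).map (Int.cast : ℤ → ℝ)) *ᵥ x) 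
        = ∑ i, ∑ j, y i * L i j * y j := by 
      rw [sum_split v (fun i => ∑ j, y i * L i j * y j)] 
      rw [hyv] 
      simp only [zero_mul, Finset.sum_const_zero, zero_add] 
      simp only [star_trivial, dotProduct, mulVec, dotProduct] 
      refine Finset.sum_congr rfl fun i _ => ?_ 
      rw [Finset.mul_sum, sum_split v (fun j => y ↑i * L ↑i j * y j), hyv] 
      simp only [mul_zero, zero_mul, zero_add] 
      refine Finset.sum_congr rfl fun j _ => ?_ 
      rw [hyx i, hyx j] 
      simp only [Matrix.map_apply, Matrix.submatrix_apply, hLdef] 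
      ring 
    rw [hQ, quad y] 
    -- nonnegativity of each term 
    have hterm : ∀ i j, 0 ≤ w i j * (y i - y j)^2 := fun i j => 
      mul_nonneg (hw_nonneg i j) (sq_nonneg _) 
    have hsum_nonneg : 0 ≤ ∑ i, ∑ j, w i j * (y i - y j)^2 := 
      Finset.sum_nonneg fun i _ => Finset.sum_nonneg fun j _ => hterm i j 
    rcases lt_or_eq_of_le hsum_nonneg with hpos | hzero 
    · positivity 
    · exfalso 
      -- all terms vanish 
      have hall : ∀ i j, w i j * (y i - y j)^2 = 0 := by 
        intro i j 
        have h1 := (Finset.sum_eq_zero_iff_of_nonneg 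
          (fun i _ => Finset.sum_nonneg fun j _ => hterm i j)).mp hzero.symm i (Finset.mem_univ i) 
        exact (Finset.sum_eq_zero_iff_of_nonneg 
          (fun j _ => hterm i j)).mp h1 j (Finset.mem_univ j) 
      have hadj : ∀ a b : Fin n, 
          (SimpleGraph.fromRel (fun i j : Fin n => 0 < O i j)).Adj a b → y a = y b := by 
        intro a b hab 
        obtain ⟨hne, hor⟩ := hab 
        have hwpos : 0 < w a b := by 
          have h0 : 0 < O a b + O b a := by rcases hor with h | h <;> omega 
          simpa [hw] using (Nat.cast_pos (α := ℝ)).mpr h0 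
        have := hall a b 
        have h2 : (y a - y b)^2 = 0 := by 
          rcases mul_eq_zero.mp this with h | h 
          · exact absurd h (ne_of_gt hwpos) 
          · exact h 
        have := pow_eq_zero_iff (n := 2) (by norm_num) |>.mp h2 
        linarith [sub_eq_zero.mp this] 
      have hzero_y : ∀ a : Fin n, y a = 0 := by 
        intro a 
        have hreach := (hconn.preconnected v a) 
        obtain ⟨p⟩ := hreach 
        have : ∀ {c d : Fin n} 
            (q : (SimpleGraph.fromRel (fun i j : Fin n => 0 < O i j)).Walk c d), y c = y d := by 
          intro c d q 
          induction q with 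
          | nil => rfl 
          | cons h _ ih => exact (hadj _ _ h).trans ih 
        rw [← this p, hyv] 
      apply hx 
      funext i 
      have := hzero_y ↑i 
      rwa [hyx i] at this 


theorem stmt17 {n : ℕ} (O : Fin n → Fin n → ℕ) (hloop : ∀ i, O i i = 0)
    (hEul : ∀ i, indeg O i = outdeg O i)
    (hconn : (SimpleGraph.fromRel (fun i j : Fin n => 0 < O i j)).Connected)
    (v : Fin n) :
    (2 : ℤ) ^ (n - 1) * arb O v ≥ arb (fun i j => O i j + O j i) v ∧
      ((2 : ℤ) ^ (n - 1) * arb O v = arb (fun i j => O i j + O j i) v ↔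
        (2 : ℤ) • lap O = lap (fun i j => O i j + O j i)) := by
  classical
  set G : Fin n → Fin n → ℕ := fun i j => O i j + O j i with hG
  set Mz : Matrix {j : Fin n // j ≠ v} {j : Fin n // j ≠ v} ℤ :=
    (lap O).submatrix (fun i => ↑i) (fun j => ↑j) with hMzdef
  set Nz : Matrix {j : Fin n // j ≠ v} {j : Fin n // j ≠ v} ℤ :=
    (lap G).submatrix (fun i => ↑i) (fun j => ↑j) with hNzdef
  have harbO : arb O v = Mz.det := rfl
  have harbG : arb G v = Nz.det := rfl
  have hcard : Fintype.card {j : Fin n // j ≠ v} = n - 1 := by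
    simp [Fintype.card_subtype_compl]
  -- key combinatorial fact: reduced Laplacian of G = M + Mᵀ
  have hNM : Nz = Mz + Mzᵀ := by
    ext i j
    by_cases h : i = j
    · subst h
      have heu := hEul ↑i
      simp only [hNzdef, hMzdef, Matrix.add_apply, Matrix.transpose_apply,
        Matrix.submatrix_apply, lap, Matrix.of_apply, if_pos rfl]
      simp only [outdeg, indeg, hG] at heu ⊢
      push_cast
      rw [Finset.sum_add_distrib]
      have heu' : (∑ x, (O x (↑i : Fin n) : ℤ)) = ∑ x, (O (↑i : Fin n) x : ℤ) := by
        exact_mod_cast heu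
      rw [heu']
    · have hij : (↑i : Fin n) ≠ ↑j := fun hc => h (Subtype.ext hc)
      simp only [hNzdef, hMzdef, Matrix.add_apply, Matrix.transpose_apply,
        Matrix.submatrix_apply, lap, Matrix.of_apply, if_neg hij, if_neg (Ne.symm hij), hG]
      push_cast
      ring
  -- pass to the reals
  set Mr : Matrix {j : Fin n // j ≠ v} {j : Fin n // j ≠ v} ℝ :=
    Mz.map (Int.cast : ℤ → ℝ) with hMrdef
  have hS : ((Nz.map (Int.cast : ℤ → ℝ))).PosDef := lap_reduced_posdef O hloop hconn v
  have hNr : Nz.map (Int.cast : ℤ → ℝ) = Mr + Mrᵀ := by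
    rw [hNM]
    ext i j
    simp [hMrdef]
  rw [hNr] at hS
  set K : Matrix {j : Fin n // j ≠ v} {j : Fin n // j ≠ v} ℝ := Mr - Mrᵀ with hKdef
  have hK : Kᵀ = -K := by
    rw [hKdef, transpose_sub, transpose_transpose, neg_sub]
  obtain ⟨hle, heq⟩ := det_add_skew hS hK
  have hSK : Mr + Mrᵀ + K = (2:ℝ) • Mr := by
    rw [hKdef]
    module
  have hdet2 : (Mr + Mrᵀ + K).det = 2 ^ (n-1) * Mr.det := by
    rw [hSK, Matrix.det_smul, hcard]
  have hcastM : Mr.det = ((Mz.det : ℤ) : ℝ) := by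
    rw [hMrdef]
    exact ((RingHom.map_det (Int.castRingHom ℝ) Mz).symm : _)
  have hcastN : (Nz.map (Int.cast : ℤ → ℝ)).det = ((Nz.det : ℤ) : ℝ) := by
    exact ((RingHom.map_det (Int.castRingHom ℝ) Nz).symm : _)
  rw [hNr] at hcastN
  constructor
  · -- the inequality
    rw [ge_iff_le, harbO, harbG]
    have hr : (Nz.det : ℝ) ≤ (((2:ℤ) ^ (n-1) * Mz.det : ℤ) : ℝ) := by
      rw [Int.cast_mul, Int.cast_pow, Int.cast_ofNat, ← hcastM, ← hcastN]
      rw [hdet2] at hle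
      linarith
    exact_mod_cast hr
  · constructor
    · -- equality implies symmetric Laplacian
      intro h
      have hreal : (Mr + Mrᵀ + K).det = (Mr + Mrᵀ).det := by
        rw [hdet2, hcastN, hcastM]
        rw [harbO, harbG] at h
        exact_mod_cast h
      have hK0 : K = 0 := heq.mp hreal
      have hMsymm : Mz = Mzᵀ := by
        have : Mr = Mrᵀ := by
          have := sub_eq_zero.mp (hKdef ▸ hK0)
          exact this
        ext i j
        have h2 := congrFun (congrFun this i) j
        simp only [hMrdef, Matrix.map_apply, Matrix.transpose_apply] at h2 ⊢
        exact_mod_cast h2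
      -- first: symmetry away from v
      have hsym' : ∀ a b : Fin n, a ≠ v → b ≠ v → O a b = O b a := by
        intro a b ha hb
        by_cases hab : a = b
        · rw [hab]
        · have h2 := congrFun (congrFun hMsymm ⟨a, ha⟩) ⟨b, hb⟩
          simp only [hMzdef, Matrix.transpose_apply, Matrix.submatrix_apply, lap,
            Matrix.of_apply, if_neg hab, if_neg (Ne.symm hab)] at h2
          exact_mod_cast neg_injective h2
      -- then: symmetry with v using the Eulerian condition
      have hsym : ∀ a b : Fin n, O a b = O b a := by
        have hvb : ∀ b : Fin n, b ≠ v → O v b = O b v := by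
          intro b hb
          have heu := hEul b
          simp only [indeg, outdeg] at heu
          rw [← Finset.add_sum_erase _ _ (Finset.mem_univ v),
            ← Finset.add_sum_erase _ _ (Finset.mem_univ v)] at heu
          have hsums : ∑ j ∈ Finset.univ.erase v, O j b
              = ∑ j ∈ Finset.univ.erase v, O b j := by
            refine Finset.sum_congr rfl fun j hj => ?_
            exact hsym' j b (Finset.mem_erase.mp hj).1 hb
          omega
        intro a b
        by_cases hab : a = b
        · rw [hab]
        · by_cases ha : a = v
          · subst ha
            exact hvb b (fun hc => hab hc.symm)
          · by_cases hb : b = v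
            · subst hb
              exact (hvb a ha).symm
            · exact hsym' a b ha hb
      -- conclude the Laplacian identity
      ext a b
      by_cases hab : a = b
      · subst hab
        have heu := hEul a
        simp only [Matrix.smul_apply, lap, Matrix.of_apply, if_pos rfl, outdeg, indeg, hG]
          at heu ⊢
        push_cast
        rw [Finset.sum_add_distrib]
        have heu' : (∑ x, (O x a : ℤ)) = ∑ x, (O a x : ℤ) := by exact_mod_cast heu
        rw [heu', smul_eq_mul]
        ring
      · simp only [Matrix.smul_apply, lap, Matrix.of_apply, if_neg hab, hG, hsym a b,
          smul_eq_mul]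
        push_cast
        ring
    · -- symmetric Laplacian implies equality
      intro h
      have hNz2 : Nz = (2:ℤ) • Mz := by
        rw [hNzdef, hMzdef, ← h]
        rfl
      rw [harbO, harbG, hNz2, Matrix.det_smul, hcard]
end

section
/- Let O be an Eulerian orientation of the complete bipartite graph K_{n,m}, with n and m even. Then arb(O) ≥ (m/2)^{n-1}·(n/2)^{m-1}. -/
open Matrix BigOperators Finset Polynomial

/- ### auxiliary lemmas -/

lemma aux_prod_ge {ι : Type*} [DecidableEq ι] (s : Finset ι) (f : ι → ℝ)
    (hf : ∀ i ∈ s, 1 ≤ f i) :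
    1 + ∑ i ∈ s, (f i - 1) ≤ ∏ i ∈ s, f i := by
  induction s using Finset.induction_on with
  | empty => simp
  | @insert a s ha ih =>
    have h1 : 1 ≤ f a := hf a (Finset.mem_insert_self a s)
    have hf' : ∀ i ∈ s, 1 ≤ f i := fun i hi => hf i (Finset.mem_insert_of_mem hi)
    have ih' := ih hf'
    have hS : 0 ≤ ∑ i ∈ s, (f i - 1) :=
      Finset.sum_nonneg fun i hi => by linarith [hf' i hi]
    rw [Finset.sum_insert ha, Finset.prod_insert ha]
    calc 1 + (f a - 1 + ∑ i ∈ s, (f i - 1))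
        ≤ f a * (1 + ∑ i ∈ s, (f i - 1)) := by nlinarith
      _ ≤ f a * ∏ i ∈ s, f i := by nlinarith

lemma aux_det_one_add_psd {k : ℕ} (M : Matrix (Fin k) (Fin k) ℝ) (hM : M.PosSemidef) :
    1 + M.trace ≤ (1 + M).det := by
  have h1 : (1 + M).IsHermitian := Matrix.isHermitian_one.add hM.1
  set ν := h1.eigenvalues with hν
  have hge : ∀ i, 1 ≤ ν i := by
    intro i
    have h := h1.eigenvalues_eq i
    set w := ⇑(h1.eigenvectorBasis i) with hwdef
    have hnorm : (star w) ⬝ᵥ w = 1 := by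
      have h2 := h1.eigenvectorBasis.orthonormal.1 i
      have h3 : (inner ℝ (h1.eigenvectorBasis i) (h1.eigenvectorBasis i) : ℝ)
          = (star w) ⬝ᵥ w := by
        rw [EuclideanSpace.inner_eq_star_dotProduct, dotProduct_comm]
      rw [← h3, real_inner_self_eq_norm_sq, h2]
      norm_num
    have hsplit : (star w) ⬝ᵥ ((1 + M) *ᵥ w) = (star w) ⬝ᵥ w + (star w) ⬝ᵥ (M *ᵥ w) := by
      rw [Matrix.add_mulVec, Matrix.one_mulVec, dotProduct_add]
    have hpos := hM.dotProduct_mulVec_nonneg w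
    rw [hν, h]
    simp only [hsplit, hnorm]
    simp only [map_add, RCLike.one_re]
    simpa using hpos
  have hdet : (1 + M).det = ∏ i, ν i := by
    have := h1.det_eq_prod_eigenvalues
    simpa using this
  have htr : (1 + M).trace = ∑ i, ν i := by
    have hsp := h1.spectral_theorem
    calc (1 + M).trace
        = Matrix.trace ((h1.eigenvectorUnitary : Matrix (Fin k) (Fin k) ℝ) *
            Matrix.diagonal (RCLike.ofReal ∘ ν) *
            (star (h1.eigenvectorUnitary : Matrix (Fin k) (Fin k) ℝ))) := by exact congrArg Matrix.trace hsp
      _ = Matrix.trace ((star (h1.eigenvectorUnitary : Matrix (Fin k) (Fin k) ℝ) *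
            (h1.eigenvectorUnitary : Matrix (Fin k) (Fin k) ℝ)) *
            Matrix.diagonal (RCLike.ofReal ∘ ν)) := by
          rw [Matrix.trace_mul_comm, Matrix.mul_assoc]
      _ = ∑ i, ν i := by
          rw [Matrix.UnitaryGroup.star_mul_self]
          simp [Matrix.trace_diagonal]
  have hsum : ∑ i, (ν i - 1) = (∑ i, ν i) - k := by
    rw [Finset.sum_sub_distrib]
    simp [Finset.card_univ]
  have htr1 : M.trace = (1 + M).trace - k := by
    simp [Matrix.trace_add, Matrix.trace_one]
  rw [hdet, htr1, htr]
  calc 1 + ((∑ i, ν i) - k) = 1 + ∑ i, (ν i - 1) := by rw [hsum]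
    _ ≤ ∏ i, ν i := aux_prod_ge Finset.univ ν (fun i _ => hge i)

def lft (a b : ℕ) (i : Fin (2*a)) : Fin (2*a+2*b) := finSumFinEquiv (Sum.inl i)
def rgt (a b : ℕ) (j : Fin (2*b)) : Fin (2*a+2*b) := finSumFinEquiv (Sum.inr j)

@[simp] lemma val_lft (a b : ℕ) (i : Fin (2*a)) : ((lft a b i : Fin (2*a+2*b)) : ℕ) = i := by
  simp [lft]

@[simp] lemma val_rgt (a b : ℕ) (j : Fin (2*b)) :
    ((rgt a b j : Fin (2*a+2*b)) : ℕ) = 2*a + j := by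
  simp [rgt]

lemma aux_sum_split {M : Type*} [AddCommMonoid M] (a b : ℕ) (f : Fin (2*a+2*b) → M) :
    ∑ k, f k = ∑ i, f (lft a b i) + ∑ j, f (rgt a b j) := by
  rw [← Equiv.sum_comp (finSumFinEquiv) f, Fintype.sum_sum_type]
  rfl

set_option maxHeartbeats 4000000 in
theorem stmt18 {a b : ℕ} (O : Fin (2 * a + 2 * b) → Fin (2 * a + 2 * b) → ℕ)
    (hpart1 : ∀ i j : Fin (2 * a + 2 * b), (i : ℕ) < 2 * a → (j : ℕ) < 2 * a → O i j = 0)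
    (hpart2 : ∀ i j : Fin (2 * a + 2 * b), 2 * a ≤ (i : ℕ) → 2 * a ≤ (j : ℕ) → O i j = 0)
    (hcross : ∀ i j : Fin (2 * a + 2 * b), (i : ℕ) < 2 * a → 2 * a ≤ (j : ℕ) →
      O i j + O j i = 1)
    (hEul : ∀ i, indeg O i = outdeg O i) (v : Fin (2 * a + 2 * b)) :
    arb O v ≥ (b : ℤ) ^ (2 * a - 1) * (a : ℤ) ^ (2 * b - 1) := by
  -- Edge cases
  rcases Nat.eq_zero_or_pos a with ha0 | hapos
  · rcases Nat.eq_zero_or_pos b with hb0 | hbpos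
    · subst ha0; subst hb0; exact absurd v.isLt (by simp)
    · subst ha0
      have hO : ∀ i j, O i j = 0 := fun i j => hpart2 i j (by omega) (by omega)
      have hlap : ∀ i j, lap O i j = 0 := by
        intro i j
        simp only [lap, Matrix.of_apply, outdeg, hO]
        split_ifs <;> simp
      have hne : Nonempty {j : Fin (2*0+2*b) // j ≠ v} := by
        haveI : Nontrivial (Fin (2*0+2*b)) := Fin.nontrivial_iff_two_le.mpr (by omega)
        rcases exists_ne v with ⟨w, hw⟩
        exact ⟨⟨w, hw⟩⟩
      have : arb O v = 0 := by
        rw [arb]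
        have hz : ((lap O).submatrix (fun i : {j : Fin (2*0+2*b) // j ≠ v} => (i : Fin (2*0+2*b)))
            (fun j : {j : Fin (2*0+2*b) // j ≠ v} => (j : Fin (2*0+2*b)))) = 0 := by
          ext i j; simp [hlap]
        rw [hz, Matrix.det_zero]
      rw [this]
      have h1 : (2*b - 1) ≠ 0 := by omega
      simp [zero_pow h1]
  · rcases Nat.eq_zero_or_pos b with hb0 | hbpos
    · subst hb0
      have hO : ∀ i j, O i j = 0 := by
        intro i j
        exact hpart1 i j (by omega) (by omega)
      have hlap : ∀ i j, lap O i j = 0 := by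
        intro i j
        simp only [lap, Matrix.of_apply, outdeg, hO]
        split_ifs <;> simp
      have hne : Nonempty {j : Fin (2*a+2*0) // j ≠ v} := by
        haveI : Nontrivial (Fin (2*a+2*0)) := Fin.nontrivial_iff_two_le.mpr (by omega)
        rcases exists_ne v with ⟨w, hw⟩
        exact ⟨⟨w, hw⟩⟩
      have : arb O v = 0 := by
        rw [arb]
        have hz : ((lap O).submatrix (fun i : {j : Fin (2*a+2*0) // j ≠ v} => (i : Fin (2*a+2*0)))
            (fun j : {j : Fin (2*a+2*0) // j ≠ v} => (j : Fin (2*a+2*0)))) = 0 := by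
          ext i j; simp [hlap]
        rw [hz, Matrix.det_zero]
      rw [this]
      have h1 : (2*a - 1) ≠ 0 := by omega
      simp [zero_pow h1]
    · -- Main case : a ≥ 1, b ≥ 1
      classical
      -- degree facts
      have hOdiag : ∀ i, O i i = 0 := by
        intro i
        rcases lt_or_ge (i:ℕ) (2*a) with h | h
        · exact hpart1 i i h h
        · exact hpart2 i i h h
      have hdeg : ∀ i : Fin (2*a+2*b), outdeg O i + indeg O i = ∑ k, (O i k + O k i) := by
        intro i; rw [outdeg, indeg, ← Finset.sum_add_distrib]
      have hdegL : ∀ i : Fin (2*a+2*b), (i:ℕ) < 2*a → outdeg O i = b := by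
        intro i hi
        have h2 : ∑ k, (O i k + O k i) = 2*b := by
          rw [aux_sum_split a b]
          have hL0 : ∀ j : Fin (2*a), O i (lft a b j) + O (lft a b j) i = 0 := by
            intro j
            rw [hpart1 i (lft a b j) hi (by simp), hpart1 (lft a b j) i (by simp) hi]
          have hR1 : ∀ j : Fin (2*b), O i (rgt a b j) + O (rgt a b j) i = 1 := by
            intro j
            exact hcross i (rgt a b j) hi (by simp)
          simp [hL0, hR1, Finset.card_univ]
        have h3 := hdeg i
        have h4 := hEul i
        omega
      have hdegR : ∀ i : Fin (2*a+2*b), 2*a ≤ (i:ℕ) → outdeg O i = a := by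
        intro i hi
        have h2 : ∑ k, (O i k + O k i) = 2*a := by
          rw [aux_sum_split a b]
          have hL1 : ∀ j : Fin (2*a), O i (lft a b j) + O (lft a b j) i = 1 := by
            intro j
            have := hcross (lft a b j) i (by simp) hi
            omega
          have hR0 : ∀ j : Fin (2*b), O i (rgt a b j) + O (rgt a b j) i = 0 := by
            intro j
            rw [hpart2 i (rgt a b j) hi (by simp), hpart2 (rgt a b j) i (by simp) hi]
          simp [hL1, hR0, Finset.card_univ]
        have h3 := hdeg i
        have h4 := hEul i
        omega
      have hrowO : ∀ i : Fin (2*a), ∑ j : Fin (2*b), O (lft a b i) (rgt a b j) = b := by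
        intro i
        have h1 : outdeg O (lft a b i) = b := hdegL _ (by simp)
        have h2 : outdeg O (lft a b i)
            = ∑ j : Fin (2*a), O (lft a b i) (lft a b j)
              + ∑ j : Fin (2*b), O (lft a b i) (rgt a b j) := by
          rw [outdeg, aux_sum_split a b]
        have h3 : ∀ j : Fin (2*a), O (lft a b i) (lft a b j) = 0 :=
          fun j => hpart1 _ _ (by simp) (by simp)
        simp only [h3, Finset.sum_const_zero, zero_add] at h2
        omega
      have hcolO : ∀ j : Fin (2*b), ∑ i : Fin (2*a), O (lft a b i) (rgt a b j) = a := by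
        intro j
        have h1 : indeg O (rgt a b j) = a := by rw [hEul]; exact hdegR _ (by simp)
        have h2 : indeg O (rgt a b j)
            = ∑ i : Fin (2*a), O (lft a b i) (rgt a b j)
              + ∑ i : Fin (2*b), O (rgt a b i) (rgt a b j) := by
          rw [indeg, aux_sum_split a b]
        have h3 : ∀ i : Fin (2*b), O (rgt a b i) (rgt a b j) = 0 :=
          fun i => hpart2 _ _ (by simp) (by simp)
        simp only [h3, Finset.sum_const_zero, add_zero] at h2
        omega
      -- the real Laplacian and its row/column sums
      set L : Matrix (Fin (2*a+2*b)) (Fin (2*a+2*b)) ℝ := (lap O).map (Int.cast) with hLdef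
      have hLapp : ∀ i j, L i j = if i = j then ((outdeg O i : ℕ) : ℝ) else -(O i j : ℝ) := by
        intro i j
        simp only [hLdef, Matrix.map_apply, lap, Matrix.of_apply]
        split_ifs <;> push_cast <;> ring
      have hrowL : ∀ i, ∑ j, L i j = 0 := by
        intro i
        have h1 : ∀ j, L i j = (if j = i then ((outdeg O i : ℝ)) else 0) - (O i j : ℝ) := by
          intro j
          rw [hLapp]
          rcases eq_or_ne i j with rfl | hij
          · simp [hOdiag i]
          · rw [if_neg hij, if_neg (Ne.symm hij)]; ring
        rw [Finset.sum_congr rfl (fun j _ => h1 j), Finset.sum_sub_distrib,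
          Finset.sum_ite_eq' Finset.univ i]
        have h2 : ∑ j, (O i j : ℝ) = ((outdeg O i : ℕ) : ℝ) := by
          rw [outdeg]; push_cast; rfl
        simp [h2]
      have hcolL : ∀ j, ∑ i, L i j = 0 := by
        intro j
        have h1 : ∀ i, L i j = (if i = j then ((outdeg O j : ℝ)) else 0) - (O i j : ℝ) := by
          intro i
          rw [hLapp]
          rcases eq_or_ne i j with rfl | hij
          · simp [hOdiag i]
          · rw [if_neg hij, if_neg hij]; ring
        rw [Finset.sum_congr rfl (fun i _ => h1 i), Finset.sum_sub_distrib,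
          Finset.sum_ite_eq' Finset.univ j]
        have h2 : ∑ i, (O i j : ℝ) = ((indeg O j : ℕ) : ℝ) := by
          rw [indeg]; push_cast; rfl
        rw [hEul j] at h2
        simp [h2]
      -- the perturbed matrix A = L + (1/2) J
      set A : Matrix (Fin (2*a+2*b)) (Fin (2*a+2*b)) ℝ :=
        Matrix.of (fun i j => L i j + 1/2) with hAdef
      have hrowA : ∀ i, (∑ j, A i j) = (a:ℝ) + b := by
        intro i
        simp only [hAdef, Matrix.of_apply]
        rw [Finset.sum_add_distrib, hrowL]
        simp [Finset.card_univ]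
        push_cast; ring
      -- Part I : det A = (a+b) * (2a+2b) * arb O v
      set M1 := A.updateCol v (fun _ => (1:ℝ)) with hM1
      set M2 := L.updateCol v (fun _ => (1:ℝ)) with hM2
      set M3 := M2.updateRow v (Pi.single v (1:ℝ)) with hM3
      set M4 : Matrix (Fin (2*a+2*b)) (Fin (2*a+2*b)) ℝ :=
        Matrix.of (fun i j => if i = v then (if j = v then 1 else 0)
          else (if j = v then 0 else L i j)) with hM4
      have step1 : A.det = ((a:ℝ)+b) * M1.det := by
        have h0 := Matrix.det_updateCol_sum A v (fun _ => (1:ℝ))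
        simp only [one_smul, smul_eq_mul, one_mul] at h0
        have h1 : (fun k => ∑ i, A k i) = ((a:ℝ)+b) • (fun _ => (1:ℝ)) := by
          funext k
          simp [hrowA k]
        rw [h1, Matrix.det_updateCol_smul] at h0
        rw [← h0, hM1]
      have step2 : M1.det = M2.det := by
        rw [← Matrix.det_transpose M1, ← Matrix.det_transpose M2]
        apply Matrix.det_eq_of_forall_row_eq_smul_add_const
          (fun i => if i = v then 0 else (1:ℝ)/2) v (by simp)
        intro i j
        by_cases hiv : i = v
        · subst hiv
          simp [hM1, hM2, Matrix.transpose_apply, Matrix.updateCol_apply]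
        · simp only [Matrix.transpose_apply, hM1, hM2, Matrix.updateCol_apply,
            if_neg hiv, hAdef, Matrix.of_apply]
          simp
      have step3 : M2.det = ((2*a+2*b : ℕ) : ℝ) * M3.det := by
        have h0 := Matrix.det_updateRow_sum M2 v (fun _ => (1:ℝ))
        simp only [one_smul, smul_eq_mul, one_mul] at h0
        have h1 : (∑ k, M2 k) = ((2*a+2*b : ℕ) : ℝ) • (Pi.single v (1:ℝ) : Fin (2*a+2*b) → ℝ) := by
          funext j
          simp only [Finset.sum_apply, Pi.smul_apply, smul_eq_mul]
          erw [Finset.sum_apply]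
          by_cases hjv : j = v
          · subst hjv
            have hh : ∀ k, M2 k j = 1 := by
              intro k; simp [hM2, Matrix.updateCol_apply]
            simp [hh, Finset.card_univ, Pi.single_eq_same]
          · have hh : ∀ k, M2 k j = L k j := by
              intro k; simp [hM2, Matrix.updateCol_apply, hjv]
            simp only [hh]
            rw [hcolL j]
            simp [Pi.single_eq_of_ne hjv]
        rw [h1, Matrix.det_updateRow_smul] at h0
        rw [← h0, hM3]
      have step4 : M3.det = M4.det := by
        apply Matrix.det_eq_of_forall_row_eq_smul_add_const
          (fun i => if i = v then 0 else (1:ℝ)) v (by simp)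
        intro i j
        by_cases hiv : i = v
        · subst hiv
          simp [hM3, hM4, Matrix.updateRow_self, Pi.single_apply]
        · simp only [hM3, Matrix.updateRow_ne hiv, hM2, Matrix.updateCol_apply,
            hM4, Matrix.of_apply, if_neg hiv]
          by_cases hjv : j = v <;> simp [hjv]
      have step5 : M4.det = ((arb O v : ℤ) : ℝ) := by
        let e := Equiv.sumCompl (fun j : Fin (2*a+2*b) => j = v)
        have hsub : M4.submatrix e e =
            Matrix.fromBlocks 1 0 0
              (((lap O).submatrix
                (fun i : {j : Fin (2*a+2*b) // j ≠ v} => (i : Fin (2*a+2*b)))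
                (fun j : {j : Fin (2*a+2*b) // j ≠ v} => (j : Fin (2*a+2*b)))).map
                  (Int.cast)) := by
          ext i j
          rcases i with i | i <;> rcases j with j | j
          · have hi : (i : Fin (2*a+2*b)) = v := i.2
            have hj : (j : Fin (2*a+2*b)) = v := j.2
            have hij : i = j := Subtype.ext (hi.trans hj.symm)
            subst hij
            simp [e, Matrix.submatrix_apply, Equiv.sumCompl_apply_inl, hM4, hi,
              Matrix.fromBlocks_apply₁₁, Matrix.one_apply]
          · have hi : (i : Fin (2*a+2*b)) = v := i.2
            have hj : ¬ (j : Fin (2*a+2*b)) = v := j.2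
            simp [e, Matrix.submatrix_apply, Equiv.sumCompl_apply_inl,
              Equiv.sumCompl_apply_inr, hM4, hi, hj, Matrix.fromBlocks_apply₁₂]
          · have hi : ¬ (i : Fin (2*a+2*b)) = v := i.2
            have hj : (j : Fin (2*a+2*b)) = v := j.2
            simp [e, Matrix.submatrix_apply, Equiv.sumCompl_apply_inl,
              Equiv.sumCompl_apply_inr, hM4, hi, hj, Matrix.fromBlocks_apply₂₁]
          · have hi : ¬ (i : Fin (2*a+2*b)) = v := i.2
            have hj : ¬ (j : Fin (2*a+2*b)) = v := j.2
            simp [e, Matrix.submatrix_apply, Equiv.sumCompl_apply_inr, hM4, hi, hj,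
              Matrix.fromBlocks_apply₂₂, hLdef, Matrix.map_apply, Matrix.submatrix_apply]
        have h5 := Matrix.det_submatrix_equiv_self e M4
        rw [← h5, hsub, Matrix.det_fromBlocks_zero₂₁, Matrix.det_one, one_mul, arb]
        rw [show (Int.cast : ℤ → ℝ) = ⇑(Int.castRingHom ℝ) from rfl]
        exact (RingHom.map_det (Int.castRingHom ℝ) _).symm
      have partI : A.det = ((a:ℝ)+b) * ((2*a+2*b : ℕ):ℝ) * ((arb O v : ℤ):ℝ) := by
        rw [step1, step2, step3, step4, step5]; ring
      -- Part II : block structure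
      have hbR : (0:ℝ) < b := by exact_mod_cast hbpos
      have haR : (0:ℝ) < a := by exact_mod_cast hapos
      set Bm : Matrix (Fin (2*a)) (Fin (2*b)) ℝ :=
        Matrix.of (fun i j => 1/2 - (O (lft a b i) (rgt a b j) : ℝ)) with hBm
      set P : Matrix (Fin (2*a)) (Fin (2*a)) ℝ :=
        Matrix.of (fun i j => (if i = j then (b:ℝ) else 0) + 1/2) with hP
      set Q : Matrix (Fin (2*b)) (Fin (2*b)) ℝ :=
        Matrix.of (fun i j => (if i = j then (a:ℝ) else 0) + 1/2) with hQ
      have hblock : A.submatrix (finSumFinEquiv) (finSumFinEquiv) =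
          Matrix.fromBlocks P Bm (-Bmᵀ) Q := by
        ext i j
        rcases i with i | i <;> rcases j with j | j
        · show A (lft a b i) (lft a b j) = P i j
          by_cases hij : i = j
          · subst hij
            simp only [hAdef, Matrix.of_apply, hLapp, if_pos rfl, hP]
            rw [hdegL _ (by simp)]
            simp
          · have hne : lft a b i ≠ lft a b j :=
              fun h => hij (Sum.inl_injective (finSumFinEquiv.injective h))
            have h0 : O (lft a b i) (lft a b j) = 0 := hpart1 _ _ (by simp) (by simp)
            simp only [hAdef, Matrix.of_apply, hLapp, if_neg hne, hP, if_neg hij, h0]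
            norm_num
        · show A (lft a b i) (rgt a b j) = Bm i j
          have hne : lft a b i ≠ rgt a b j := by
            intro h
            have := congrArg Fin.val h
            simp at this
            omega
          simp only [hAdef, Matrix.of_apply, hLapp, if_neg hne, hBm]
          ring
        · show A (rgt a b i) (lft a b j) = (-Bmᵀ) i j
          have hne : rgt a b i ≠ lft a b j := by
            intro h
            have := congrArg Fin.val h
            simp at this
            omega
          have hc := hcross (lft a b j) (rgt a b i) (by simp) (by simp)
          have hcR : ((O (lft a b j) (rgt a b i) : ℝ)) + (O (rgt a b i) (lft a b j) : ℝ) = 1 := by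
            exact_mod_cast hc
          simp only [hAdef, Matrix.of_apply, hLapp, if_neg hne, Matrix.neg_apply,
            Matrix.transpose_apply, hBm]
          linarith
        · show A (rgt a b i) (rgt a b j) = Q i j
          by_cases hij : i = j
          · subst hij
            simp only [hAdef, Matrix.of_apply, hLapp, if_pos rfl, hQ]
            rw [hdegR _ (by simp)]
            simp
          · have hne : rgt a b i ≠ rgt a b j :=
              fun h => hij (Sum.inr_injective (finSumFinEquiv.injective h))
            have h0 : O (rgt a b i) (rgt a b j) = 0 := hpart2 _ _ (by simp) (by simp)
            simp only [hAdef, Matrix.of_apply, hLapp, if_neg hne, hQ, if_neg hij, h0]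
            norm_num
      -- determinants of the diagonal blocks
      have hPdet : P.det = (b:ℝ)^(2*a) * (((a:ℝ)+b)/b) := by
        have hP2 : P = (b:ℝ) • (1 + Matrix.replicateCol Unit (fun _ => (1:ℝ)/(2*b))
            * Matrix.replicateRow Unit (fun _ => (1:ℝ))) := by
          have hcr : ∀ (i j : Fin (2*a)),
              ((Matrix.replicateCol Unit (fun _ => (1:ℝ)/(2*b)) * Matrix.replicateRow Unit (fun _ => (1:ℝ))) i j)
                = 1/(2*b) := by
            intro i j
            rw [Matrix.mul_apply]
            simp
          ext i j
          rw [Matrix.smul_apply, Matrix.add_apply, hcr, Matrix.one_apply]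
          simp only [hP, Matrix.of_apply, smul_eq_mul]
          by_cases hij : i = j
          · rw [if_pos hij, if_pos hij]
            field_simp
            try ring
          · rw [if_neg hij, if_neg hij]
            field_simp
            try ring
        rw [hP2, Matrix.det_smul, Matrix.det_one_add_replicateCol_mul_replicateRow]
        simp only [dotProduct, Finset.sum_const, Finset.card_univ, Fintype.card_fin,
          nsmul_eq_mul, one_mul, smul_eq_mul]
        push_cast
        field_simp
        ring
      have hQdet : Q.det = (a:ℝ)^(2*b) * (((a:ℝ)+b)/a) := by
        have hQ2 : Q = (a:ℝ) • (1 + Matrix.replicateCol Unit (fun _ => (1:ℝ)/(2*a))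
            * Matrix.replicateRow Unit (fun _ => (1:ℝ))) := by
          have hcr : ∀ (i j : Fin (2*b)),
              ((Matrix.replicateCol Unit (fun _ => (1:ℝ)/(2*a)) * Matrix.replicateRow Unit (fun _ => (1:ℝ))) i j)
                = 1/(2*a) := by
            intro i j
            rw [Matrix.mul_apply]
            simp
          ext i j
          rw [Matrix.smul_apply, Matrix.add_apply, hcr, Matrix.one_apply]
          simp only [hQ, Matrix.of_apply, smul_eq_mul]
          by_cases hij : i = j
          · rw [if_pos hij, if_pos hij]
            field_simp
            try ring
          · rw [if_neg hij, if_neg hij]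
            field_simp
            try ring
        rw [hQ2, Matrix.det_smul, Matrix.det_one_add_replicateCol_mul_replicateRow]
        simp only [dotProduct, Finset.sum_const, Finset.card_univ, Fintype.card_fin,
          nsmul_eq_mul, one_mul, smul_eq_mul]
        push_cast
        field_simp
      have hPdet0 : P.det ≠ 0 := by
        rw [hPdet]; positivity
      haveI : Invertible P := P.invertibleOfIsUnitDet (isUnit_iff_ne_zero.mpr hPdet0)
      -- row and column sums of Bm vanish
      have hBmrow : ∀ i, ∑ j, Bm i j = 0 := by
        intro i
        have h1 : ∑ j, (O (lft a b i) (rgt a b j) : ℝ) = (b:ℝ) := by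
          rw [← Nat.cast_sum, hrowO i]
        simp only [hBm, Matrix.of_apply]
        rw [Finset.sum_sub_distrib, h1, Finset.sum_const, Finset.card_univ, Fintype.card_fin,
          nsmul_eq_mul]
        push_cast
        ring
      have hBmcol : ∀ j, ∑ i, Bm i j = 0 := by
        intro j
        have h1 : ∑ i, (O (lft a b i) (rgt a b j) : ℝ) = (a:ℝ) := by
          rw [← Nat.cast_sum, hcolO j]
        simp only [hBm, Matrix.of_apply]
        rw [Finset.sum_sub_distrib, h1, Finset.sum_const, Finset.card_univ, Fintype.card_fin,
          nsmul_eq_mul]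
        push_cast
        ring
      -- P * Bm = b • Bm, hence ⅟P * Bm = b⁻¹ • Bm
      have hPB : P * Bm = (b:ℝ) • Bm := by
        ext i j
        simp only [Matrix.mul_apply, hP, Matrix.of_apply, Matrix.smul_apply, smul_eq_mul]
        have hh : ∀ k, ((if i = k then (b:ℝ) else 0) + 1/2) * Bm k j
            = (if i = k then (b:ℝ) * Bm k j else 0) + 1/2 * Bm k j := by
          intro k; split_ifs <;> ring
        rw [Finset.sum_congr rfl (fun k _ => hh k), Finset.sum_add_distrib,
          Finset.sum_ite_eq, ← Finset.mul_sum, hBmcol j]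
        simp
      have hinvPB : ⅟P * Bm = (b:ℝ)⁻¹ • Bm := by
        have h1 : ⅟P * (P * Bm) = Bm := by
          rw [← Matrix.mul_assoc, invOf_mul_self, Matrix.one_mul]
        rw [hPB, Matrix.mul_smul] at h1
        calc ⅟P * Bm = (b:ℝ)⁻¹ • ((b:ℝ) • (⅟P * Bm)) := by
              rw [smul_smul, inv_mul_cancel₀ (ne_of_gt hbR), one_smul]
          _ = (b:ℝ)⁻¹ • Bm := by rw [h1]
      -- the Gram matrix
      set M0 : Matrix (Fin (2*b)) (Fin (2*b)) ℝ := Bmᵀ * Bm with hM0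
      have hM0row : ∀ i, ∑ k, M0 i k = 0 := by
        intro i
        simp only [hM0, Matrix.mul_apply, Matrix.transpose_apply]
        rw [Finset.sum_comm]
        have hh : ∀ l, ∑ k, Bm l i * Bm l k = 0 := by
          intro l; rw [← Finset.mul_sum, hBmrow l, mul_zero]
        simp [hh]
      have hMQ : M0 * Q = (a:ℝ) • M0 := by
        ext i j
        simp only [Matrix.mul_apply, hQ, Matrix.of_apply, Matrix.smul_apply, smul_eq_mul]
        have hh : ∀ k, M0 i k * ((if k = j then (a:ℝ) else 0) + 1/2)
            = (if k = j then M0 i k * (a:ℝ) else 0) + 1/2 * M0 i k := by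
          intro k; split_ifs <;> ring
        rw [Finset.sum_congr rfl (fun k _ => hh k), Finset.sum_add_distrib,
          Finset.sum_ite_eq', ← Finset.mul_sum, hM0row i]
        simp [mul_comm]
      set c : ℝ := ((a:ℝ)*b)⁻¹ with hc
      have hfact : (1 + c • M0) * Q = Q + (b:ℝ)⁻¹ • M0 := by
        rw [Matrix.add_mul, Matrix.one_mul, Matrix.smul_mul, hMQ, smul_smul]
        congr 2
        rw [hc]
        field_simp
      -- Schur complement
      have hSchur : Q - (-Bmᵀ) * ⅟P * Bm = Q + (b:ℝ)⁻¹ • M0 := by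
        have h1 : (-Bmᵀ) * ⅟P * Bm = -((b:ℝ)⁻¹ • M0) := by
          rw [Matrix.mul_assoc, Matrix.neg_mul, hinvPB, Matrix.mul_smul, hM0]
        rw [h1, sub_neg_eq_add]
      -- positive semidefiniteness
      have hpsd : (c • M0).PosSemidef := by
        have h0 : M0.PosSemidef := by
          have h1 := Matrix.posSemidef_conjTranspose_mul_self Bm
          have h2 : Bmᴴ = Bmᵀ := by
            ext i j; simp [Matrix.conjTranspose_apply]
          rwa [h2] at h1
        have hc0 : 0 ≤ c := by rw [hc]; positivity
        refine Matrix.PosSemidef.of_dotProduct_mulVec_nonneg ?_ ?_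
        · show (c • M0)ᴴ = c • M0
          rw [Matrix.conjTranspose_smul, h0.1]
          congr 1
        · intro x
          rw [Matrix.smul_mulVec, dotProduct_smul, smul_eq_mul]
          exact mul_nonneg hc0 (h0.dotProduct_mulVec_nonneg x)
      -- trace
      have hOBsq : ∀ i j, Bm i j * Bm i j = 1/4 := by
        intro i j
        have h := hcross (lft a b i) (rgt a b j) (by simp) (by simp)
        have h1 : O (lft a b i) (rgt a b j) = 0 ∨ O (lft a b i) (rgt a b j) = 1 := by omega
        simp only [hBm, Matrix.of_apply]
        rcases h1 with h1 | h1 <;> rw [h1] <;> norm_num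
      have htrace : (c • M0).trace = 1 := by
        have htr0 : M0.trace = (a:ℝ) * b := by
          rw [Matrix.trace]
          have hh : ∀ j, Matrix.diag M0 j = (2*a) * (1/4 : ℝ) := by
            intro j
            simp only [Matrix.diag_apply, hM0, Matrix.mul_apply, Matrix.transpose_apply, hOBsq]
            rw [Finset.sum_const, Finset.card_univ, Fintype.card_fin, nsmul_eq_mul]
            push_cast
            ring
          rw [Finset.sum_congr rfl (fun j _ => hh j), Finset.sum_const, Finset.card_univ,
            Fintype.card_fin, nsmul_eq_mul]
          push_cast
          ring
        rw [Matrix.trace_smul, htr0, hc, smul_eq_mul]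
        field_simp
      -- the key inequality
      have hkey : 2 ≤ (1 + c • M0).det := by
        have h1 := aux_det_one_add_psd (c • M0) hpsd
        rw [htrace] at h1
        linarith
      -- assembling Part II
      have hdetA2 : A.det = P.det * ((1 + c • M0).det * Q.det) := by
        have h1 : A.det = (A.submatrix finSumFinEquiv finSumFinEquiv).det :=
          (Matrix.det_submatrix_equiv_self _ _).symm
        rw [h1, hblock, Matrix.det_fromBlocks₁₁, hSchur]
        congr 1
        rw [← Matrix.det_mul, hfact]
      -- final computation
      have habpos : (0:ℝ) < (a:ℝ) + b := by positivity
      have hQdetpos : (0:ℝ) < Q.det := by rw [hQdet]; positivity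
      have hPdetpos : (0:ℝ) < P.det := by rw [hPdet]; positivity
      have hineq : P.det * (2 * Q.det) ≤ ((a:ℝ)+b) * ((2*a+2*b : ℕ):ℝ) * ((arb O v : ℤ):ℝ) := by
        rw [← partI, hdetA2]
        apply mul_le_mul_of_nonneg_left _ (le_of_lt hPdetpos)
        apply mul_le_mul_of_nonneg_right hkey (le_of_lt hQdetpos)
      have hfinalR : (b:ℝ)^(2*a-1) * (a:ℝ)^(2*b-1) ≤ ((arb O v : ℤ):ℝ) := by
        have hb1 : (b:ℝ)^(2*a) = (b:ℝ)^(2*a-1) * b := by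
          rw [← pow_succ]
          congr 1
          omega
        have ha1 : (a:ℝ)^(2*b) = (a:ℝ)^(2*b-1) * a := by
          rw [← pow_succ]
          congr 1
          omega
        have hcast : ((2*a+2*b : ℕ):ℝ) = 2*((a:ℝ)+b) := by push_cast; ring
        rw [hPdet, hQdet, hb1, ha1, hcast] at hineq
        have hLHS : (b:ℝ)^(2*a-1) * b * (((a:ℝ)+b)/b) * (2 * ((a:ℝ)^(2*b-1) * a * (((a:ℝ)+b)/a)))
            = (2*((a:ℝ)+b)^2) * ((b:ℝ)^(2*a-1) * (a:ℝ)^(2*b-1)) := by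
          field_simp
        rw [hLHS] at hineq
        have h2 : ((a:ℝ)+b) * (2*((a:ℝ)+b)) * ((arb O v : ℤ):ℝ)
            = (2*((a:ℝ)+b)^2) * ((arb O v : ℤ):ℝ) := by ring
        rw [h2] at hineq
        have hpos2 : (0:ℝ) < 2*((a:ℝ)+b)^2 := by positivity
        exact le_of_mul_le_mul_left hineq hpos2
      exact_mod_cast hfinalR
end

section
/- For any connected undirected multigraph G on n vertices with m edges, (1/2^m)·Σ_O allarb(O) = (n/2^{n-1})·sp(G), where the sum is over all 2^m orientations O of G, allarb(O) is the total number of arborescences of O over all roots, and sp(G) is the number of spanning trees of G. -/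
open Matrix BigOperators Finset Polynomial

/-- The digraph with a single arc, from edge `e` oriented by `b`. -/
def arcD {n m : ℕ} (edges : Fin m → Fin n × Fin n) (e : Fin m) (b : Bool) :
    Fin n → Fin n → ℕ :=
  fun i j => if (if b then edges e = (i, j) else edges e = (j, i)) then 1 else 0

lemma lap_sum {n k : ℕ} (D : Fin k → Fin n → Fin n → ℕ) :
    lap (fun i j => ∑ e, D e i j) = ∑ e, lap (D e) := by
  ext i j
  rcases eq_or_ne i j with rfl | hij
  · simp only [lap, Matrix.of_apply, if_pos rfl, Matrix.sum_apply, outdeg]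
    push_cast
    rw [Finset.sum_comm]
  · simp [lap, Matrix.sum_apply, hij]

lemma lap_add {n : ℕ} (D1 D2 : Fin n → Fin n → ℕ) :
    lap (fun i j => D1 i j + D2 i j) = lap D1 + lap D2 := by
  ext i j
  rcases eq_or_ne i j with rfl | hij
  · simp only [lap, Matrix.of_apply, if_pos rfl, Matrix.add_apply, outdeg]
    push_cast
    rw [Finset.sum_add_distrib]
  · simp [lap, Matrix.add_apply, hij]
    push_cast
    ring

lemma lap_arc_zero_row {n m : ℕ} (edges : Fin m → Fin n × Fin n) (e : Fin m) (b : Bool)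
    (i : Fin n) (hi : i ≠ (if b then (edges e).1 else (edges e).2)) (j : Fin n) :
    lap (arcD edges e b) i j = 0 := by
  have harc : ∀ k, arcD edges e b i k = 0 := by
    intro k
    cases b
    · simp only [Bool.false_eq_true, if_false] at hi
      simp only [arcD, Bool.false_eq_true, if_false, ite_eq_right_iff]
      intro h
      exact absurd (by rw [h] : (edges e).2 = i) (Ne.symm hi)
    · simp only [if_true] at hi
      simp only [arcD, if_true, ite_eq_right_iff]
      intro h
      exact absurd (by rw [h] : (edges e).1 = i) (Ne.symm hi)
  have houtdeg : outdeg (arcD edges e b) i = 0 := by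
    simp [outdeg, harc]
  rcases eq_or_ne i j with rfl | hij
  · simp [lap, houtdeg]
  · simp [lap, hij, harc j]

lemma lap_arc_neg_row {n m : ℕ} (edges : Fin m → Fin n × Fin n)
    (hloop : ∀ e, (edges e).1 ≠ (edges e).2) (e : Fin m) (j : Fin n) :
    lap (arcD edges e false) (edges e).2 j = - lap (arcD edges e true) (edges e).1 j := by
  rcases he : edges e with ⟨a, c⟩
  have hac : a ≠ c := by have h := hloop e; rwa [he] at h
  simp only [he]
  rcases eq_or_ne j a with rfl | hja
  · simp [lap, arcD, he, outdeg, hac, hac.symm, Prod.ext_iff, Finset.sum_ite_eq,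
      Finset.sum_ite_eq', Finset.filter_eq, Finset.filter_eq']
  · rcases eq_or_ne j c with rfl | hjc
    · simp [lap, arcD, he, outdeg, hac, hac.symm, Prod.ext_iff, Finset.sum_ite_eq,
        Finset.sum_ite_eq', Finset.filter_eq, Finset.filter_eq']
    · simp [lap, arcD, he, hja.symm, hjc.symm, Prod.ext_iff]

variable {ι : Type*} [DecidableEq ι] [Fintype ι]

lemma det_sum_rows {m : ℕ} (A : Fin m → Matrix ι ι ℤ) :
    (∑ e, A e).det = ∑ φ : ι → Fin m, Matrix.det (Matrix.of fun i j => A (φ i) i j) := by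
  have h := (Matrix.detRowAlternating (n := ι) (R := ℤ)).toMultilinearMap.map_sum
    (g := fun i e => A e i) (α := fun _ => Fin m)
  have e1 : (∑ e, A e).det = Matrix.detRowAlternating fun i => ∑ e : Fin m, A e i := by
    show Matrix.detRowAlternating _ = _
    congr 1
    ext i j
    simp [Matrix.sum_apply]
  rw [e1]
  exact h

lemma det_sum_rows_bool (A : ι → Bool → Matrix ι ι ℤ) :
    (∑ t : ι → Bool, Matrix.det (Matrix.of fun i j => A i (t i) i j))
      = Matrix.det (Matrix.of fun i j => (A i true + A i false) i j) := by
  have h := (Matrix.detRowAlternating (n := ι) (R := ℤ)).toMultilinearMap.map_sum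
    (g := fun i b => A i b i) (α := fun _ => Bool)
  have e1 : Matrix.det (Matrix.of fun i j => (A i true + A i false) i j)
      = Matrix.detRowAlternating fun i => ∑ b : Bool, A i b i := by
    show Matrix.detRowAlternating _ = _
    congr 1
    ext i j
    simp [Matrix.add_apply]
  rw [e1]
  exact h.symm

variable {ι : Type*} [DecidableEq ι] [Fintype ι]

lemma det_eq_zero_of_neg_row (M : Matrix ι ι ℤ) (i1 i2 : ι) (h : i1 ≠ i2)
    (hr : ∀ j, M i2 j = - M i1 j) : M.det = 0 := by
  have hM : M = Matrix.updateRow M i2 ((-1 : ℤ) • M i1) := by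
    ext i j
    rcases eq_or_ne i i2 with rfl | hi
    · simp [hr j]
    · simp [Matrix.updateRow_apply, hi]
  rw [hM, Matrix.det_updateRow_smul, Matrix.det_updateRow_eq_zero h]
  ring

lemma sum_comp_inj {m : ℕ} (φ : ι → Fin m) (hφ : Function.Injective φ)
    (g : (ι → Bool) → ℤ) :
    ∑ f : Fin m → Bool, g (f ∘ φ) = 2 ^ (m - Fintype.card ι) * ∑ t : ι → Bool, g t := by
  classical
  have hcard : ∀ t : ι → Bool,
      Fintype.card {f : Fin m → Bool // f ∘ φ = t} = 2 ^ (m - Fintype.card ι) := by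
    intro t
    have e : {f : Fin m → Bool // f ∘ φ = t} ≃ ({x : Fin m // x ∉ Set.range φ} → Bool) := by
      refine ⟨fun f x => f.1 x.1, fun u => ⟨fun x =>
        if h : x ∈ Set.range φ then t ((Equiv.ofInjective φ hφ).symm ⟨x, h⟩)
        else u ⟨x, h⟩, ?_⟩, ?_, ?_⟩
      · funext i
        simp only [Function.comp_apply]
        rw [dif_pos (Set.mem_range_self i)]
        congr 1
        exact (Equiv.ofInjective φ hφ).injective (by simp)
      · rintro ⟨f, rfl⟩
        ext x
        simp only [Function.comp_apply]
        split
        · next h =>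
            obtain ⟨i, hi⟩ := h
            subst hi
            have : (Equiv.ofInjective φ hφ).symm ⟨φ i, Set.mem_range_self i⟩ = i :=
              (Equiv.ofInjective φ hφ).injective (by simp)
            rw [this]
        · rfl
      · intro u
        funext x
        simp [x.2]
    rw [Fintype.card_congr e]
    simp only [Fintype.card_fun, Fintype.card_bool]
    congr 1
    have h1 : Fintype.card {x : Fin m // x ∉ Set.range φ}
        = m - Fintype.card {x : Fin m // x ∈ Set.range φ} := by
      simpa using Fintype.card_subtype_compl (fun x : Fin m => x ∈ Set.range φ)
    rw [h1]
    congr 1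
    rw [← Fintype.card_congr (Equiv.ofInjective φ hφ)]
  calc ∑ f : Fin m → Bool, g (f ∘ φ)
      = ∑ t : ι → Bool, ∑ f : {f : Fin m → Bool // f ∘ φ = t}, g (f.1 ∘ φ) :=
        (Fintype.sum_fiberwise (fun f : Fin m → Bool => f ∘ φ) (fun f => g (f ∘ φ))).symm
    _ = ∑ t : ι → Bool, (2 ^ (m - Fintype.card ι) : ℤ) * g t := by
        refine Finset.sum_congr rfl fun t _ => ?_
        rw [Finset.sum_congr rfl (fun f _ => by rw [f.2] : ∀ f : {f : Fin m → Bool // f ∘ φ = t},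
          f ∈ univ → g (f.1 ∘ φ) = g t)]
        simp [hcard t, mul_comm]
    _ = _ := by rw [← Finset.mul_sum]

lemma per_root {n m : ℕ} (edges : Fin m → Fin n × Fin n)
    (hloop : ∀ e, (edges e).1 ≠ (edges e).2) (w : Fin n) :
    (2 : ℤ) ^ (n - 1) * ∑ f : Fin m → Bool, arb (fun i j =>
        (Finset.univ.filter (fun e => (f e = true ∧ edges e = (i, j)) ∨
          (f e = false ∧ edges e = (j, i)))).card) w
      = 2 ^ m * arb (fun i j =>
        (Finset.univ.filter (fun e => edges e = (i, j) ∨ edges e = (j, i))).card) w := by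
  classical
  have hcard : Fintype.card {j : Fin n // j ≠ w} = n - 1 := by
    simpa using Fintype.card_subtype_compl (fun j : Fin n => j = w)
  set B : Fin m → Bool → Matrix {j : Fin n // j ≠ w} {j : Fin n // j ≠ w} ℤ := fun e b =>
    (lap (arcD edges e b)).submatrix (fun i => (i : Fin n)) (fun j => (j : Fin n)) with hB
  -- Step A
  have stepA : ∀ f : Fin m → Bool, arb (fun i j =>
      (Finset.univ.filter (fun e => (f e = true ∧ edges e = (i, j)) ∨
        (f e = false ∧ edges e = (j, i)))).card) w = (∑ e, B e (f e)).det := by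
    intro f
    have hD : (fun i j => (Finset.univ.filter (fun e => (f e = true ∧ edges e = (i, j)) ∨
        (f e = false ∧ edges e = (j, i)))).card) = fun i j => ∑ e, arcD edges e (f e) i j := by
      funext i j
      rw [Finset.card_filter]
      refine Finset.sum_congr rfl fun e _ => ?_
      cases hfe : f e <;> simp [arcD, hfe]
    rw [arb, hD, lap_sum]
    congr 1
    ext i j
    simp [Matrix.sum_apply, hB]
  -- Step B
  have stepB : arb (fun i j =>
      (Finset.univ.filter (fun e => edges e = (i, j) ∨ edges e = (j, i))).card) w
      = (∑ e, (B e true + B e false)).det := by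
    have hD : (fun i j => (Finset.univ.filter
        (fun e => edges e = (i, j) ∨ edges e = (j, i))).card)
        = fun i j => ∑ e, (arcD edges e true i j + arcD edges e false i j) := by
      funext i j
      rw [Finset.card_filter]
      refine Finset.sum_congr rfl fun e _ => ?_
      by_cases h1 : edges e = (i, j) <;> by_cases h2 : edges e = (j, i)
      · exfalso
        have : (i, j) = (j, i) := h1.symm.trans h2
        have hij : i = j := (Prod.mk.injEq _ _ _ _).mp this |>.1
        have h3 := hloop e
        rw [h1, hij] at h3
        exact h3 rfl
      · have hij : i ≠ j := by
          intro hc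
          have h3 := hloop e
          rw [h1, hc] at h3
          exact h3 rfl
        simp [arcD, h1, h2, hij, hij.symm]
      · have hij : j ≠ i := by
          intro hc
          have h3 := hloop e
          rw [h2, hc] at h3
          exact h3 rfl
        simp [arcD, h1, h2, hij, hij.symm]
      · simp [arcD, h1, h2]
    rw [arb, hD, lap_sum]
    congr 1
    ext i j
    simp only [Matrix.sum_apply, Matrix.submatrix_apply]
    refine Finset.sum_congr rfl fun e _ => ?_
    rw [lap_add]
    simp [Matrix.add_apply, hB]
  simp only [stepA, stepB]
  -- expand determinant of sums
  have expand : ∀ f : Fin m → Bool, (∑ e, B e (f e)).det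
      = ∑ φ : {j : Fin n // j ≠ w} → Fin m,
          Matrix.det (Matrix.of fun i j => B (φ i) (f (φ i)) i j) := by
    intro f
    exact det_sum_rows (fun e => B e (f e))
  simp only [expand]
  rw [Finset.sum_comm]
  -- kill non-injective φ in the oriented sum
  have horizero : ∀ φ : {j : Fin n // j ≠ w} → Fin m, ¬ Function.Injective φ →
      ∀ f : Fin m → Bool, Matrix.det (Matrix.of fun i j => B (φ i) (f (φ i)) i j) = 0 := by
    intro φ hφ f
    obtain ⟨i1, i2, heq, hne⟩ := Function.not_injective_iff.mp hφ
    set e := φ i1 with he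
    set r : Fin n := if f e then (edges e).1 else (edges e).2 with hr
    by_cases h1 : (i1 : Fin n) = r
    · apply Matrix.det_eq_zero_of_row_eq_zero i2
      intro j
      have h2 : (i2 : Fin n) ≠ r := by
        rw [← h1]
        exact fun hc => hne (Subtype.ext hc).symm
      simp only [Matrix.of_apply, ← heq, ← he]
      exact lap_arc_zero_row edges e (f e) _ h2 _
    · apply Matrix.det_eq_zero_of_row_eq_zero i1
      intro j
      simp only [Matrix.of_apply, ← he]
      exact lap_arc_zero_row edges e (f e) _ h1 _
  -- kill non-injective φ in the symmetric sum
  have hsymzero : ∀ φ : {j : Fin n // j ≠ w} → Fin m, ¬ Function.Injective φ →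
      Matrix.det (Matrix.of fun i j => (B (φ i) true + B (φ i) false) i j) = 0 := by
    intro φ hφ
    obtain ⟨i1, i2, heq, hne⟩ := Function.not_injective_iff.mp hφ
    set e := φ i1 with he
    set a := (edges e).1 with ha
    set c := (edges e).2 with hc
    have hrow : ∀ i : {j : Fin n // j ≠ w}, φ i = e → ∀ j,
        (Matrix.of fun i j => (B (φ i) true + B (φ i) false) i j) i j
        = lap (arcD edges e true) a (j : Fin n) * (if (i : Fin n) = a then 1 else 0)
          - lap (arcD edges e true) a (j : Fin n) * (if (i : Fin n) = c then 1 else 0) := by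
      intro i hi j
      simp only [Matrix.of_apply, hi, Matrix.add_apply, hB, Matrix.submatrix_apply]
      by_cases h1 : (i : Fin n) = a
      · have h2 : (i : Fin n) ≠ c := by
          rw [h1]; exact hloop e
        rw [h1]
        rw [lap_arc_zero_row edges e false a (by simp [← hc, h1 ▸ h2]) j]
        simp [h1, h1 ▸ h2]
      · by_cases h2 : (i : Fin n) = c
        · rw [h2]
          rw [lap_arc_zero_row edges e true c (by simp [← ha, h2 ▸ h1]) j,
            lap_arc_neg_row edges hloop e]
          simp [h2 ▸ h1, h2]
          rfl
        · rw [lap_arc_zero_row edges e true _ (by simpa using h1) j,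
            lap_arc_zero_row edges e false _ (by simpa using h2) j]
          simp [h1, h2]
    have heq2 : φ i2 = e := by rw [← heq, he]
    have hac : a ≠ c := by rw [ha, hc]; exact hloop e
    have hcoe : (i1 : Fin n) ≠ (i2 : Fin n) := fun hc => hne (Subtype.ext hc)
    by_cases hz1 : (i1 : Fin n) = a ∨ (i1 : Fin n) = c
    · by_cases hz2 : (i2 : Fin n) = a ∨ (i2 : Fin n) = c
      · apply det_eq_zero_of_neg_row _ i1 i2 hne
        intro j
        rw [hrow i1 he.symm j, hrow i2 heq2 j]
        rcases hz1 with h1 | h1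
        · have h2 : (i2 : Fin n) = c := by
            rcases hz2 with h2 | h2
            · exact absurd (h1.trans h2.symm) hcoe
            · exact h2
          simp [h1, h2, hac, hac.symm, fun hcc : (i2:Fin n) = a => hcoe (h1.trans hcc.symm)]
        · have h2 : (i2 : Fin n) = a := by
            rcases hz2 with h2 | h2
            · exact h2
            · exact absurd (h1.trans h2.symm) hcoe
          simp only [h1, h2, if_pos rfl, if_neg hac, if_neg hac.symm]
          ring
      · apply Matrix.det_eq_zero_of_row_eq_zero i2
        intro j
        rw [hrow i2 heq2 j]
        push_neg at hz2
        simp [hz2.1, hz2.2]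
    · apply Matrix.det_eq_zero_of_row_eq_zero i1
      intro j
      rw [hrow i1 he.symm j]
      push_neg at hz1
      simp [hz1.1, hz1.2]
  rw [det_sum_rows (fun e => B e true + B e false), Finset.mul_sum, Finset.mul_sum]
  refine Finset.sum_congr rfl fun φ _ => ?_
  by_cases hφ : Function.Injective φ
  · have h1 : (∑ f : Fin m → Bool, (Matrix.of fun i j => B (φ i) (f (φ i)) i j).det)
        = 2 ^ (m - Fintype.card {j : Fin n // j ≠ w}) * ∑ t : {j : Fin n // j ≠ w} → Bool,
          (Matrix.of fun i j => B (φ i) (t i) i j).det :=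
      sum_comp_inj φ hφ (fun t => (Matrix.of fun i j => B (φ i) (t i) i j).det)
    rw [h1]
    have h2 := det_sum_rows_bool (fun i => B (φ i))
    rw [h2, hcard]
    have hk : n - 1 ≤ m := by
      rw [← hcard]
      simpa using Fintype.card_le_of_injective φ hφ
    rw [← mul_assoc, ← pow_add, Nat.add_sub_cancel' hk]
  · rw [Finset.sum_eq_zero fun f _ => horizero φ hφ f, mul_zero, hsymzero φ hφ, mul_zero]

lemma minor_eq_adjugate {n : ℕ} (M : Matrix (Fin n) (Fin n) ℚ) (w : Fin n) :
    (M.submatrix (fun i : {j : Fin n // j ≠ w} => (i : Fin n))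
      (fun j : {j : Fin n // j ≠ w} => (j : Fin n))).det = M.adjugate w w := by
  classical
  rw [Matrix.adjugate_apply]
  set N := M.updateRow w (Pi.single w 1) with hN
  let e2 : Unit ≃ {a : Fin n // ¬ a ≠ w} :=
    ⟨fun _ => ⟨w, by simp⟩, fun _ => (), fun _ => rfl, fun a => Subtype.ext (by
      simpa using (not_not.mp a.2).symm)⟩
  let σ : {a : Fin n // a ≠ w} ⊕ Unit ≃ Fin n :=
    ((Equiv.refl _).sumCongr e2).trans (Equiv.sumCompl (fun a : Fin n => a ≠ w))
  have h1 : N.det = (N.submatrix σ σ).det := (Matrix.det_submatrix_equiv_self σ N).symm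
  have h2 : N.submatrix σ σ = Matrix.fromBlocks
      (M.submatrix (fun i : {j : Fin n // j ≠ w} => (i : Fin n))
        (fun j : {j : Fin n // j ≠ w} => (j : Fin n)))
      (Matrix.of fun i : {j : Fin n // j ≠ w} => fun _ : Unit => M i w) 0 1 := by
    have he2 : ∀ u : Unit, ((e2 u : {a : Fin n // ¬ a ≠ w}) : Fin n) = w := fun _ => rfl
    ext i j
    rcases i with i | i <;> rcases j with j | j
    · simp [σ, N, Matrix.updateRow_apply, Matrix.fromBlocks, i.2]
    · simp [σ, N, Matrix.updateRow_apply, Matrix.fromBlocks, i.2, he2]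
    · simp [σ, N, Matrix.updateRow_apply, Matrix.fromBlocks, he2, Pi.single_apply, j.2]
    · simp [σ, N, Matrix.updateRow_apply, Matrix.fromBlocks, he2, Pi.single_apply]
  rw [← h1.symm, h2, Matrix.det_fromBlocks_zero₂₁]
  simp

lemma cofactor_const {n : ℕ} (M : Matrix (Fin n) (Fin n) ℚ) (hn : 0 < n)
    (hsym : Mᵀ = M) (hrow : ∀ i, ∑ j, M i j = 0)
    (hker : ∀ x : Fin n → ℚ, M *ᵥ x = 0 → ∀ i j, x i = x j) (v w : Fin n) :
    (M.submatrix (fun i : {j : Fin n // j ≠ w} => (i : Fin n))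
        (fun j : {j : Fin n // j ≠ w} => (j : Fin n))).det
      = (M.submatrix (fun i : {j : Fin n // j ≠ v} => (i : Fin n))
        (fun j : {j : Fin n // j ≠ v} => (j : Fin n))).det := by
  rw [minor_eq_adjugate, minor_eq_adjugate]
  have hne : Nonempty (Fin n) := ⟨⟨0, hn⟩⟩
  have hdet : M.det = 0 := by
    rw [← Matrix.exists_mulVec_eq_zero_iff]
    refine ⟨fun _ => 1, ?_, ?_⟩
    · intro h
      exact one_ne_zero (congrFun h hne.some)
    · funext i
      simp [Matrix.mulVec, dotProduct, hrow i]
  have hcol : ∀ j i i', M.adjugate i j = M.adjugate i' j := by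
    intro j i i'
    apply hker (fun i => M.adjugate i j)
    funext k
    have h1 : (M * M.adjugate) k j = ((M.det) • (1 : Matrix (Fin n) (Fin n) ℚ)) k j := by
      rw [Matrix.mul_adjugate]
    rw [hdet] at h1
    simpa [Matrix.mul_apply, Matrix.mulVec, dotProduct] using h1
  have hAsym : ∀ i j, M.adjugate i j = M.adjugate j i := by
    intro i j
    have : (M.adjugate)ᵀ = M.adjugate := by
      rw [Matrix.adjugate_transpose, hsym]
    calc M.adjugate i j = (M.adjugate)ᵀ j i := rfl
      _ = M.adjugate j i := by rw [this]
  calc M.adjugate w w = M.adjugate v w := hcol w w v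
    _ = M.adjugate w v := hAsym v w
    _ = M.adjugate v v := hcol v w v

lemma ker_const {n m : ℕ} (edges : Fin m → Fin n × Fin n)
    (hloop : ∀ e, (edges e).1 ≠ (edges e).2)
    (hconn : (SimpleGraph.fromRel (fun i j : Fin n => ∃ e, edges e = (i, j))).Connected)
    (x : Fin n → ℚ)
    (hx : ((lap (fun i j =>
        (Finset.univ.filter (fun e => edges e = (i, j) ∨ edges e = (j, i))).card)).map
        (Int.cast : ℤ → ℚ)) *ᵥ x = 0) :
    ∀ i j, x i = x j := by
  classical
  set D : Fin n → Fin n → ℕ := fun i j =>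
    (Finset.univ.filter (fun e => edges e = (i, j) ∨ edges e = (j, i))).card with hD
  set d : Fin n → Fin n → ℚ := fun i j => (D i j : ℚ) with hd
  have hd0 : ∀ i j, 0 ≤ d i j := fun i j => Nat.cast_nonneg _
  have hdii : ∀ i, d i i = 0 := by
    intro i
    simp only [hd, hD, Nat.cast_eq_zero, Finset.card_eq_zero]
    rw [Finset.filter_eq_empty_iff]
    rintro e _ (h | h) <;> exact hloop e (by rw [h])
  -- row equations
  have hrow : ∀ i, ∑ j, d i j * (x i - x j) = 0 := by
    intro i
    have h0 : ∑ j, ((lap D).map (Int.cast : ℤ → ℚ)) i j * x j = 0 := by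
      have := congrFun hx i
      simpa [Matrix.mulVec, dotProduct] using this
    have hentry : ∀ j, ((lap D).map (Int.cast : ℤ → ℚ)) i j
        = (if i = j then ∑ k, d i k else 0) - d i j := by
      intro j
      rcases eq_or_ne i j with rfl | hij
      · have h1 : ((lap D).map (Int.cast : ℤ → ℚ)) i i = ((outdeg D i : ℕ) : ℚ) := by
          simp [lap, Matrix.map_apply]
        rw [h1, if_pos rfl, hdii, sub_zero, hd]
        simp only [outdeg]
        push_cast
        rfl
      · simp [lap, Matrix.map_apply, hij, hd]
    calc ∑ j, d i j * (x i - x j)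
        = (∑ j, d i j) * x i - ∑ j, d i j * x j := by
          rw [Finset.sum_mul]
          rw [← Finset.sum_sub_distrib]
          exact Finset.sum_congr rfl fun j _ => by ring
      _ = ∑ j, ((if i = j then ∑ k, d i k else 0) - d i j) * x j := by
          simp only [sub_mul, Finset.sum_sub_distrib, ite_mul, zero_mul]
          congr 1
          rw [Finset.sum_ite_eq]
          simp
      _ = ∑ j, ((lap D).map (Int.cast : ℤ → ℚ)) i j * x j :=
          (Finset.sum_congr rfl fun j _ => by rw [hentry j]).symm
      _ = 0 := h0
  -- max vertex
  have hne : Nonempty (Fin n) := hconn.nonempty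
  obtain ⟨i0, hi0⟩ := Finite.exists_max x
  -- propagation
  have hprop : ∀ i, x i = x i0 → ∀ j, d i j ≠ 0 → x j = x i := by
    intro i hxi j hdij
    have hterms : ∀ k ∈ univ, 0 ≤ d i k * (x i - x k) := by
      intro k _
      apply mul_nonneg (hd0 i k)
      rw [hxi]
      exact sub_nonneg.mpr (hi0 k)
    have := (Finset.sum_eq_zero_iff_of_nonneg hterms).mp (hrow i) j (Finset.mem_univ j)
    rcases mul_eq_zero.mp this with h | h
    · exact absurd h hdij
    · linarith [sub_eq_zero.mp h]
  -- adjacency gives positive multiplicity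
  have hadj : ∀ i j, (SimpleGraph.fromRel (fun i j : Fin n => ∃ e, edges e = (i, j))).Adj i j →
      d i j ≠ 0 := by
    intro i j hij
    rw [SimpleGraph.fromRel_adj] at hij
    obtain ⟨-, h | h⟩ := hij
    · obtain ⟨e, he⟩ := h
      simp only [hd, hD, Nat.cast_ne_zero]
      exact Finset.card_ne_zero_of_mem
        (Finset.mem_filter.mpr ⟨Finset.mem_univ e, Or.inl he⟩)
    · obtain ⟨e, he⟩ := h
      simp only [hd, hD, Nat.cast_ne_zero]
      exact Finset.card_ne_zero_of_mem
        (Finset.mem_filter.mpr ⟨Finset.mem_univ e, Or.inr he⟩)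
  -- along walks from i0
  have haux : ∀ a b : Fin n, ∀ _ : (SimpleGraph.fromRel
      (fun i j : Fin n => ∃ e, edges e = (i, j))).Walk a b, x a = x i0 → x b = x i0 := by
    intro a b p
    induction p with
    | nil => exact id
    | @cons u v w h p ih =>
      intro hxu
      exact ih ((hprop u hxu v (hadj u v h)).trans hxu)
  have hwalk : ∀ j, x j = x i0 := fun j =>
    haux i0 j ((hconn.preconnected i0 j).some) rfl
  intro i j
  rw [hwalk i, hwalk j]

theorem stmt19 {n m : ℕ} (edges : Fin m → Fin n × Fin n)
    (hloop : ∀ e, (edges e).1 ≠ (edges e).2)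
    (hconn : (SimpleGraph.fromRel (fun i j : Fin n => ∃ e, edges e = (i, j))).Connected)
    (v : Fin n) :
    (2 : ℤ) ^ (n - 1) * ∑ f : Fin m → Bool, allarb (fun i j =>
        (Finset.univ.filter (fun e => (f e = true ∧ edges e = (i, j)) ∨
          (f e = false ∧ edges e = (j, i)))).card)
      = (n : ℤ) * 2 ^ m * arb (fun i j =>
        (Finset.univ.filter (fun e => edges e = (i, j) ∨ edges e = (j, i))).card) v := by
  classical
  have hn : 0 < n := v.pos
  have harbeq : ∀ w, arb (fun i j =>
      (Finset.univ.filter (fun e => edges e = (i, j) ∨ edges e = (j, i))).card) w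
      = arb (fun i j =>
      (Finset.univ.filter (fun e => edges e = (i, j) ∨ edges e = (j, i))).card) v := by
    intro w
    set D : Fin n → Fin n → ℕ := fun i j =>
      (Finset.univ.filter (fun e => edges e = (i, j) ∨ edges e = (j, i))).card with hDdef
    set M : Matrix (Fin n) (Fin n) ℚ := (lap D).map (Int.cast : ℤ → ℚ) with hM
    have hDii : ∀ i, D i i = 0 := by
      intro i
      simp only [hDdef, Finset.card_eq_zero]
      rw [Finset.filter_eq_empty_iff]
      rintro e _ (h | h) <;> exact hloop e (by rw [h])
    have hDsymm : ∀ i j, D i j = D j i := by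
      intro i j
      simp only [hDdef]
      congr 1
      apply Finset.filter_congr
      intro e _
      exact or_comm
    have hcast : ∀ u : Fin n, ((arb D u : ℤ) : ℚ)
        = (M.submatrix (fun i : {j : Fin n // j ≠ u} => (i : Fin n))
            (fun j : {j : Fin n // j ≠ u} => (j : Fin n))).det := by
      intro u
      rw [arb]
      calc (((((lap D).submatrix (fun i : {j : Fin n // j ≠ u} => (i : Fin n))
              (fun j : {j : Fin n // j ≠ u} => (j : Fin n))).det : ℤ)) : ℚ)
          = (Int.castRingHom ℚ) ((lap D).submatrix (fun i : {j : Fin n // j ≠ u} => (i : Fin n))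
              (fun j : {j : Fin n // j ≠ u} => (j : Fin n))).det := rfl
        _ = (((lap D).submatrix (fun i : {j : Fin n // j ≠ u} => (i : Fin n))
              (fun j : {j : Fin n // j ≠ u} => (j : Fin n))).map (Int.castRingHom ℚ)).det :=
            RingHom.map_det _ _
        _ = (M.submatrix (fun i : {j : Fin n // j ≠ u} => (i : Fin n))
              (fun j : {j : Fin n // j ≠ u} => (j : Fin n))).det := by
            congr 1
    have hsym : Mᵀ = M := by
      ext i j
      rcases eq_or_ne i j with rfl | hij
      · rfl
      · simp only [Matrix.transpose_apply, hM, Matrix.map_apply, lap, Matrix.of_apply,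
          if_neg hij, if_neg (Ne.symm hij)]
        rw [hDsymm j i]
    have hrow : ∀ i, ∑ j, M i j = 0 := by
      intro i
      have hout : ((outdeg D i : ℤ) : ℚ) = ∑ j, (D i j : ℚ) := by
        simp only [outdeg]
        push_cast
        rfl
      calc ∑ j, M i j
          = ∑ j, ((if i = j then ∑ k, (D i k : ℚ) else 0) - (D i j : ℚ)) := by
            refine Finset.sum_congr rfl fun j _ => ?_
            rcases eq_or_ne i j with rfl | hij
            · rw [show M i i = ((outdeg D i : ℤ) : ℚ) from by simp [hM, lap]]
              rw [hout, hDii, if_pos rfl]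
              push_cast
              ring
            · simp [hM, Matrix.map_apply, lap, hij]
        _ = (∑ k, (D i k : ℚ)) - ∑ j, (D i j : ℚ) := by
            rw [Finset.sum_sub_distrib]
            congr 1
            rw [Finset.sum_ite_eq]
            simp
        _ = 0 := by ring
    have hcc := cofactor_const M hn hsym hrow
      (fun x hx => ker_const edges hloop hconn x hx) v w
    have : ((arb D w : ℤ) : ℚ) = ((arb D v : ℤ) : ℚ) := by
      rw [hcast w, hcast v, hcc]
    exact_mod_cast this
  have h1 : (∑ f : Fin m → Bool, allarb (fun i j =>
      (Finset.univ.filter (fun e => (f e = true ∧ edges e = (i, j)) ∨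
        (f e = false ∧ edges e = (j, i)))).card))
      = ∑ w, ∑ f : Fin m → Bool, arb (fun i j =>
      (Finset.univ.filter (fun e => (f e = true ∧ edges e = (i, j)) ∨
        (f e = false ∧ edges e = (j, i)))).card) w := by
    simp only [allarb]
    rw [Finset.sum_comm]
  rw [h1, Finset.mul_sum]
  have h2 : ∀ w : Fin n, (2 : ℤ) ^ (n - 1) * ∑ f : Fin m → Bool, arb (fun i j =>
      (Finset.univ.filter (fun e => (f e = true ∧ edges e = (i, j)) ∨
        (f e = false ∧ edges e = (j, i)))).card) w
      = 2 ^ m * arb (fun i j =>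
      (Finset.univ.filter (fun e => edges e = (i, j) ∨ edges e = (j, i))).card) v := by
    intro w
    rw [per_root edges hloop w, harbeq w]
  rw [Finset.sum_congr rfl fun w _ => h2 w]
  rw [Finset.sum_const, Finset.card_univ, Fintype.card_fin, nsmul_eq_mul]
  push_cast
  ring
end
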